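/- arXiv:2309.09170 — 6 statements merged into one kernel-verified Lean document; each statement's English description precedes it below -/
import Mathlib

section
/- Let b > 0 and d ∈ ℕ. For μ ∈ ℝ^d let P_μ denote the product measure on ℝ^d whose i-th factor is the Laplace distribution with location μ_i and scale b (density (1/(2b))·exp(−|z−μ_i|/b)). If μ, μ′ ∈ ℝ^d satisfy ‖μ − μ′‖₁ ≤ Δ and b = Δ/ε for some ε > 0, then for every measurable set S ⊆ ℝ^d, P_μ(S) ≤ e^ε · P_{μ′}(S). (Consequently the Laplace mechanism M(x) = f(x) + Lap(Δ₁(f)/ε)^d is ε-differentially private.) -/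
open MeasureTheory ProbabilityTheory Real

/-- The Rényi divergence of order `l` between measures `P` and `Q`:
`D_l(P‖Q) = (1/(l−1))·log ∫ (dP/dQ)^l dQ`. -/
noncomputable def renyiDiv {Y : Type*} [MeasurableSpace Y] (P Q : Measure Y) (l : ℝ) : ℝ :=
  (l - 1)⁻¹ * Real.log (∫ y, (P.rnDeriv Q y).toReal ^ l ∂Q)

/-- A pair of probability measures `(P, Q)` satisfies `δ`-approximate `ρ`-CDP:
there exist probability measures `P', P'', Q', Q''` with `P = (1−δ)P' + δP''` and
`Q = (1−δ)Q' + δQ''` such that `D_l(P'‖Q') ≤ ρ·l` and `D_l(Q'‖P') ≤ ρ·l` for all `l > 1`. -/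
def IsApproxCDPPair {Y : Type*} [MeasurableSpace Y] (P Q : Measure Y) (ρ δ : ℝ) : Prop :=
  ∃ P' P'' Q' Q'' : Measure Y,
    IsProbabilityMeasure P' ∧ IsProbabilityMeasure P'' ∧
      IsProbabilityMeasure Q' ∧ IsProbabilityMeasure Q'' ∧
      P = ENNReal.ofReal (1 - δ) • P' + ENNReal.ofReal δ • P'' ∧
      Q = ENNReal.ofReal (1 - δ) • Q' + ENNReal.ofReal δ • Q'' ∧
      ∀ l : ℝ, 1 < l → renyiDiv P' Q' l ≤ ρ * l ∧ renyiDiv Q' P' l ≤ ρ * l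

/-- The Laplace distribution with location `μ` and scale `b`, with density
`(1/(2b))·exp(−|z−μ|/b)` with respect to Lebesgue measure. -/
noncomputable def laplace (b μ : ℝ) : Measure ℝ :=
  volume.withDensity fun z => ENNReal.ofReal ((2 * b)⁻¹ * Real.exp (-|z - μ| / b))

lemma lintegral_pi_prod_aux : ∀ {d : ℕ} (ν : Fin d → Measure ℝ), (∀ i, SigmaFinite (ν i)) →
    ∀ f : Fin d → ℝ → ENNReal, (∀ i, Measurable (f i)) →
    (∫⁻ x, ∏ i, f i (x i) ∂Measure.pi ν) = ∏ i, ∫⁻ t, f i t ∂ν i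
  | 0, ν, _, f, _ => by
    simp [lintegral_const, Measure.pi_univ]
  | (n + 1), ν, hν, f, hf => by
    haveI := hν
    have hmp := measurePreserving_piFinSuccAbove ν 0
    have hGm : Measurable fun p : ℝ × (Fin n → ℝ) => f 0 p.1 * ∏ j, f j.succ (p.2 j) :=
      ((hf 0).comp measurable_fst).mul
        (Finset.measurable_prod _ fun j _ => (hf j.succ).comp (measurable_pi_apply j |>.comp measurable_snd))
    have h1 : (∫⁻ x, ∏ i, f i (x i) ∂Measure.pi ν)
        = ∫⁻ p, f 0 p.1 * ∏ j, f j.succ (p.2 j)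
            ∂((ν 0).prod (Measure.pi fun j => ν ((0 : Fin (n+1)).succAbove j))) := by
      rw [← hmp.lintegral_comp hGm]
      congr 1
      ext x
      simp [MeasurableEquiv.piFinSuccAbove, Fin.prod_univ_succ, Fin.tail]
    rw [h1]
    have h2 : (∫⁻ p : ℝ × (Fin n → ℝ), f 0 p.1 * ∏ j, f j.succ (p.2 j)
          ∂((ν 0).prod (Measure.pi fun j => ν ((0 : Fin (n+1)).succAbove j))))
        = (∫⁻ t, f 0 t ∂ν 0) *
          ∫⁻ y : Fin n → ℝ, ∏ j, f j.succ (y j) ∂(Measure.pi fun j => ν ((0 : Fin (n+1)).succAbove j)) :=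
      lintegral_prod_mul (f := f 0) (g := fun y : Fin n → ℝ => ∏ j, f j.succ (y j)) (hf 0).aemeasurable
        (Finset.measurable_prod _ fun j _ => (hf j.succ).comp (measurable_pi_apply j)).aemeasurable
    rw [h2]
    rw [lintegral_pi_prod_aux (fun j : Fin n => ν ((0 : Fin (n+1)).succAbove j)) (fun j => hν _)
      (fun j : Fin n => f j.succ) (fun j => hf _)]
    simp [Fin.prod_univ_succ, Fin.succAbove_zero]

lemma pi_withDensity_aux {d : ℕ} (f : Fin d → ℝ → ENNReal) (hf : ∀ i, Measurable (f i))
    (hsf : ∀ i, SigmaFinite (volume.withDensity (f i))) :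
    Measure.pi (fun i => volume.withDensity (f i)) =
      (Measure.pi fun _ : Fin d => (volume : Measure ℝ)).withDensity fun x => ∏ i, f i (x i) := by
  haveI := hsf
  refine Measure.pi_eq fun s hs => ?_
  rw [withDensity_apply _ (MeasurableSet.univ_pi hs)]
  rw [← lintegral_indicator (MeasurableSet.univ_pi hs) (fun x : Fin d → ℝ => ∏ i, f i (x i))]
  have hind : ∀ x : Fin d → ℝ,
      (Set.pi Set.univ s).indicator (fun x => ∏ i, f i (x i)) x
        = ∏ i, (s i).indicator (f i) (x i) := by
    intro x
    by_cases hx : x ∈ Set.pi Set.univ s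
    · rw [Set.indicator_of_mem hx]
      exact Finset.prod_congr rfl fun i _ =>
        (Set.indicator_of_mem (hx i (Set.mem_univ i)) _).symm
    · rw [Set.indicator_of_notMem hx]
      rw [Set.mem_univ_pi] at hx
      push_neg at hx
      obtain ⟨i, hi⟩ := hx
      exact (Finset.prod_eq_zero (Finset.mem_univ i)
        (by rw [Set.indicator_of_notMem hi])).symm
  simp_rw [hind]
  rw [lintegral_pi_prod_aux _ (fun _ => inferInstance) _
    (fun i => (hf i).indicator (hs i))]
  exact Finset.prod_congr rfl fun i _ => by
    rw [lintegral_indicator (hs i), withDensity_apply _ (hs i)]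

/-- The `d`-dimensional Laplace mechanism with scale `b = Δ/ε` is `ε`-differentially private:
if `‖μ − μ′‖₁ ≤ Δ` then for every measurable `S ⊆ ℝ^d`, `P_μ(S) ≤ e^ε · P_{μ′}(S)`,
where `P_μ` is the product of Laplace distributions with locations `μ_i` and scale `b`. -/
theorem laplace_mechanism_pure_dp (b ε Δ : ℝ) (hb : 0 < b) (hε : 0 < ε) (d : ℕ)
    (μ μ' : Fin d → ℝ) (hΔ : ∑ i, |μ i - μ' i| ≤ Δ) (hbe : b = Δ / ε)
    (S : Set (Fin d → ℝ)) (hS : MeasurableSet S) :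
    Measure.pi (fun i => laplace b (μ i)) S ≤
      ENNReal.ofReal (Real.exp ε) * Measure.pi (fun i => laplace b (μ' i)) S := by
  have hΔb : Δ = b * ε := by rw [hbe]; field_simp
  have hfm : ∀ c : ℝ, Measurable fun z : ℝ =>
      ENNReal.ofReal ((2 * b)⁻¹ * Real.exp (-|z - c| / b)) := by
    intro c
    apply Measurable.ennreal_ofReal
    fun_prop
  have hsf : ∀ c : ℝ, SigmaFinite (volume.withDensity fun z : ℝ =>
      ENNReal.ofReal ((2 * b)⁻¹ * Real.exp (-|z - c| / b))) :=
    fun c => SigmaFinite.withDensity_ofReal _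
  have h1 : Measure.pi (fun i => laplace b (μ i)) =
      (Measure.pi fun _ : Fin d => (volume : Measure ℝ)).withDensity
        fun x => ∏ i, ENNReal.ofReal ((2 * b)⁻¹ * Real.exp (-|x i - μ i| / b)) := by
    simp only [laplace]
    exact pi_withDensity_aux _ (fun i => hfm (μ i)) (fun i => hsf (μ i))
  have h2 : Measure.pi (fun i => laplace b (μ' i)) =
      (Measure.pi fun _ : Fin d => (volume : Measure ℝ)).withDensity
        fun x => ∏ i, ENNReal.ofReal ((2 * b)⁻¹ * Real.exp (-|x i - μ' i| / b)) := by
    simp only [laplace]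
    exact pi_withDensity_aux _ (fun i => hfm (μ' i)) (fun i => hsf (μ' i))
  rw [h1, h2, withDensity_apply _ hS, withDensity_apply _ hS]
  have hreal : ∀ x : Fin d → ℝ,
      (∏ i, (2 * b)⁻¹ * Real.exp (-|x i - μ i| / b))
        ≤ Real.exp ε * ∏ i, (2 * b)⁻¹ * Real.exp (-|x i - μ' i| / b) := by
    intro x
    have hsum : (∑ i, -|x i - μ i| / b) ≤ ε + ∑ i, -|x i - μ' i| / b := by
      have hA : (∑ i, -|x i - μ i|) ≤ Δ + ∑ i, -|x i - μ' i| := by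
        have h3 : (∑ i, (-|x i - μ i| - -|x i - μ' i|)) ≤ ∑ i, |μ i - μ' i| := by
          refine Finset.sum_le_sum fun i _ => ?_
          have h4 := abs_sub_abs_le_abs_sub (x i - μ' i) (x i - μ i)
          have h5 : (x i - μ' i) - (x i - μ i) = μ i - μ' i := by ring
          rw [h5] at h4
          linarith
        rw [Finset.sum_sub_distrib] at h3
        linarith
      calc (∑ i, -|x i - μ i| / b) = (∑ i, -|x i - μ i|) / b := by
            rw [Finset.sum_div]
        _ ≤ (Δ + ∑ i, -|x i - μ' i|) / b := by
            gcongr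
        _ = ε + ∑ i, -|x i - μ' i| / b := by
            rw [add_div, Finset.sum_div, hΔb, mul_div_cancel_left₀ _ (ne_of_gt hb)]
    calc (∏ i, (2 * b)⁻¹ * Real.exp (-|x i - μ i| / b))
        = (2 * b)⁻¹ ^ d * Real.exp (∑ i, -|x i - μ i| / b) := by
          rw [Finset.prod_mul_distrib, Finset.prod_const, Real.exp_sum]
          simp [Finset.card_univ]
      _ ≤ (2 * b)⁻¹ ^ d * Real.exp (ε + ∑ i, -|x i - μ' i| / b) := by
          exact mul_le_mul_of_nonneg_left (Real.exp_le_exp.mpr hsum)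
            (pow_nonneg (by positivity) d)
      _ = Real.exp ε * ∏ i, (2 * b)⁻¹ * Real.exp (-|x i - μ' i| / b) := by
          rw [Finset.prod_mul_distrib, Finset.prod_const, Real.exp_add, Real.exp_sum]
          simp [Finset.card_univ]
          ring
  have hpoint : ∀ x : Fin d → ℝ,
      (∏ i, ENNReal.ofReal ((2 * b)⁻¹ * Real.exp (-|x i - μ i| / b)))
        ≤ ENNReal.ofReal (Real.exp ε) *
          ∏ i, ENNReal.ofReal ((2 * b)⁻¹ * Real.exp (-|x i - μ' i| / b)) := by
    intro x
    rw [← ENNReal.ofReal_prod_of_nonneg (fun i _ => by positivity),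
      ← ENNReal.ofReal_prod_of_nonneg (fun i _ => by positivity),
      ← ENNReal.ofReal_mul (Real.exp_nonneg ε)]
    exact ENNReal.ofReal_le_ofReal (hreal x)
  calc (∫⁻ x in S, ∏ i, ENNReal.ofReal ((2 * b)⁻¹ * Real.exp (-|x i - μ i| / b)))
      ≤ ∫⁻ x in S, ENNReal.ofReal (Real.exp ε) *
          ∏ i, ENNReal.ofReal ((2 * b)⁻¹ * Real.exp (-|x i - μ' i| / b)) :=
        lintegral_mono fun x => hpoint x
    _ = ENNReal.ofReal (Real.exp ε) *
        ∫⁻ x in S, ∏ i, ENNReal.ofReal ((2 * b)⁻¹ * Real.exp (-|x i - μ' i| / b)) :=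
        lintegral_const_mul' _ _ ENNReal.ofReal_ne_top
end

section
/- Let P and Q be probability measures on a common measurable space, let ε > 0 and δ ∈ [0,1), and suppose that for every measurable set S, P(S) ≤ e^ε Q(S) + δ and Q(S) ≤ e^ε P(S) + δ. Then the pair (P, Q) satisfies δ-approximate ε²/2-CDP: there exist probability measures P′, P″, Q′, Q″ with P = (1−δ)P′ + δP″ and Q = (1−δ)Q′ + δQ″ such that D_λ(P′‖Q′) ≤ (ε²/2)·λ and D_λ(Q′‖P′) ≤ (ε²/2)·λ for all λ > 1. -/
open MeasureTheory ProbabilityTheory Real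
open scoped ENNReal NNReal

lemma aux_sinh_le (x : ℝ) (hx : 0 ≤ x) : Real.sinh x ≤ x * Real.cosh x := by
  have hd : ∀ y : ℝ, HasDerivAt (fun y : ℝ => y * Real.cosh y - Real.sinh y)
      (1 * Real.cosh y + y * Real.sinh y - Real.cosh y) y := fun y =>
    ((hasDerivAt_id' (x := y)).mul (Real.hasDerivAt_cosh y)).sub (Real.hasDerivAt_sinh y)
  have key : MonotoneOn (fun y : ℝ => y * Real.cosh y - Real.sinh y) (Set.Ici 0) := by
    apply monotoneOn_of_deriv_nonneg (convex_Ici 0)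
    · exact (((continuous_id.mul Real.continuous_cosh).sub Real.continuous_sinh)).continuousOn
    · intro y _; exact (hd y).differentiableAt.differentiableWithinAt
    · intro y hy
      rw [(hd y).deriv]
      have hy0 : (0:ℝ) < y := by simpa using hy
      have := Real.sinh_nonneg_iff.2 hy0.le
      nlinarith
  have h0 := key (Set.self_mem_Ici) (Set.mem_Ici.2 hx) hx
  simp at h0
  linarith

lemma aux_cosh_sub_one_le (x : ℝ) (hx : 0 ≤ x) : Real.cosh x - 1 ≤ x / 2 * Real.sinh x := by
  have hd : ∀ y : ℝ, HasDerivAt (fun y : ℝ => y / 2 * Real.sinh y - Real.cosh y)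
      ((1/2) * Real.sinh y + y / 2 * Real.cosh y - Real.sinh y) y := fun y => by
    have h1 : HasDerivAt (fun y : ℝ => y / 2) (1/2) y := (hasDerivAt_id' (x := y)).div_const 2
    exact (h1.mul (Real.hasDerivAt_sinh y)).sub (Real.hasDerivAt_cosh y)
  have key : MonotoneOn (fun y : ℝ => y / 2 * Real.sinh y - Real.cosh y) (Set.Ici 0) := by
    apply monotoneOn_of_deriv_nonneg (convex_Ici 0)
    · exact ((continuous_id.div_const 2).mul Real.continuous_sinh).sub
        Real.continuous_cosh |>.continuousOn
    · intro y _; exact (hd y).differentiableAt.differentiableWithinAt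
    · intro y hy
      rw [(hd y).deriv]
      have hy0 : (0:ℝ) < y := by simpa using hy
      have := aux_sinh_le y hy0.le
      nlinarith
  have h0 := key (Set.self_mem_Ici) (Set.mem_Ici.2 hx) hx
  simp at h0
  linarith

/-- The key analytic inequality. -/
lemma aux_key (a t : ℝ) (ha : 0 < a) (ht : 0 < t) :
    Real.cosh (a * t) + (Real.cosh t - 1) / Real.sinh t * Real.sinh (a * t)
      ≤ Real.exp ((a ^ 2 + a) * t ^ 2 / 2) := by
  have hst : 0 < Real.sinh t := Real.sinh_pos_iff.2 ht
  have hat : 0 < a * t := mul_pos ha ht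
  have hca : 0 < Real.cosh (a * t) := Real.cosh_pos _
  have h1 : (Real.cosh t - 1) / Real.sinh t ≤ t / 2 := by
    rw [div_le_iff₀ hst]
    simpa [mul_comm] using aux_cosh_sub_one_le t ht.le
  have h2 : Real.sinh (a * t) ≤ (a * t) * Real.cosh (a * t) := aux_sinh_le _ hat.le
  have h3 : Real.cosh (a * t) + (Real.cosh t - 1) / Real.sinh t * Real.sinh (a * t)
      ≤ Real.cosh (a * t) * (1 + t / 2 * (a * t)) := by
    have hs : 0 ≤ Real.sinh (a * t) := Real.sinh_nonneg_iff.2 hat.le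
    have := mul_le_mul_of_nonneg_right h1 hs
    nlinarith
  have h4 : Real.cosh (a * t) ≤ Real.exp ((a * t) ^ 2 / 2) := Real.cosh_le_exp_half_sq _
  have h5 : 1 + t / 2 * (a * t) ≤ Real.exp (a * t ^ 2 / 2) := by
    have := Real.add_one_le_exp (a * t ^ 2 / 2)
    nlinarith
  calc Real.cosh (a * t) + (Real.cosh t - 1) / Real.sinh t * Real.sinh (a * t)
      ≤ Real.cosh (a * t) * (1 + t / 2 * (a * t)) := h3
    _ ≤ Real.exp ((a * t) ^ 2 / 2) * Real.exp (a * t ^ 2 / 2) := by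
        apply mul_le_mul h4 h5 (by nlinarith) (Real.exp_nonneg _)
    _ = Real.exp ((a ^ 2 + a) * t ^ 2 / 2) := by
        rw [← Real.exp_add]; ring_nf

/-- Chord bound for the exponential. -/
lemma aux_chord (c z : ℝ) (hc : 0 < c) (h1 : -c ≤ z) (h2 : z ≤ c) :
    Real.exp z ≤ Real.cosh c + z / c * Real.sinh c := by
  have hθ : z = ((c - z) / (2 * c)) * (-c) + ((c + z) / (2 * c)) * c := by
    field_simp; ring
  have ha : (0:ℝ) ≤ (c - z) / (2 * c) := by
    apply div_nonneg (by linarith) (by linarith)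
  have hb : (0:ℝ) ≤ (c + z) / (2 * c) := by
    apply div_nonneg (by linarith) (by linarith)
  have hab : (c - z) / (2 * c) + (c + z) / (2 * c) = 1 := by field_simp; ring
  have := convexOn_exp.2 (Set.mem_univ (-c)) (Set.mem_univ c) ha hb hab
  simp only [smul_eq_mul] at this
  rw [← hθ] at this
  refine this.trans (le_of_eq ?_)
  rw [Real.cosh_eq, Real.sinh_eq]
  field_simp
  ring

lemma aux_renyi {Y : Type*} [MeasurableSpace Y] (P' Q' : Measure Y)
    [IsProbabilityMeasure P'] [IsProbabilityMeasure Q'] (ε : ℝ) (hε : 0 < ε)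
    (hac : P' ≪ Q')
    (hub : ∀ᵐ y ∂Q', P'.rnDeriv Q' y ≤ ENNReal.ofReal (Real.exp ε))
    (hlb : ∀ᵐ y ∂Q', ENNReal.ofReal (Real.exp (-ε)) ≤ P'.rnDeriv Q' y) :
    ∀ l : ℝ, 1 < l → renyiDiv P' Q' l ≤ ε ^ 2 / 2 * l := by
  intro l hl
  set f : Y → ℝ := fun y => (P'.rnDeriv Q' y).toReal with hf_def
  have hf_meas : Measurable f := (Measure.measurable_rnDeriv _ _).ennreal_toReal
  -- a.e. bounds on f over Q'
  have hfub : ∀ᵐ y ∂Q', f y ≤ Real.exp ε := by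
    filter_upwards [hub] with y hy
    exact ENNReal.toReal_le_of_le_ofReal (Real.exp_nonneg _) hy
  have hflb : ∀ᵐ y ∂Q', Real.exp (-ε) ≤ f y := by
    filter_upwards [hlb, Measure.rnDeriv_lt_top P' Q'] with y hy hy'
    rw [ENNReal.ofReal_le_iff_le_toReal hy'.ne] at hy
    exact hy
  have hbnd : ∀ᵐ y ∂Q', Real.exp (-ε) ≤ f y ∧ f y ≤ Real.exp ε := hflb.and hfub
  -- transfer to P'
  have hbndP : ∀ᵐ y ∂P', Real.exp (-ε) ≤ f y ∧ f y ≤ Real.exp ε := hac.ae_le hbnd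
  set Z : Y → ℝ := fun y => Real.log (f y) with hZ_def
  have hZ_meas : Measurable Z := hf_meas.log
  have hZbndP : ∀ᵐ y ∂P', -ε ≤ Z y ∧ Z y ≤ ε := by
    filter_upwards [hbndP] with y hy
    have hpos : 0 < f y := lt_of_lt_of_le (Real.exp_pos _) hy.1
    constructor
    · have := Real.log_le_log (Real.exp_pos _) hy.1
      rwa [Real.log_exp] at this
    · have := Real.log_le_log hpos hy.2
      rwa [Real.log_exp] at this
  have hZint : Integrable Z P' := by
    refine (integrable_const ε).mono' hZ_meas.aestronglyMeasurable ?_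
    filter_upwards [hZbndP] with y hy
    rw [Real.norm_eq_abs, abs_le]
    exact ⟨hy.1, hy.2⟩
  set m : ℝ := ∫ y, Z y ∂P' with hm_def
  set a : ℝ := l - 1 with ha_def
  have ha : 0 < a := by simp [ha_def]; linarith
  have hsinhε : 0 < Real.sinh ε := Real.sinh_pos_iff.2 hε
  have hsinha : 0 < Real.sinh (a * ε) := Real.sinh_pos_iff.2 (mul_pos ha hε)
  -- Step: ∫ f⁻¹ dP' = 1
  have hinv_int : ∫ y, (f y)⁻¹ ∂P' = 1 := by
    have h1 : ∫ y, (P'.rnDeriv Q' y).toReal • (f y)⁻¹ ∂Q' = ∫ y, (f y)⁻¹ ∂P' :=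
      integral_rnDeriv_smul hac
    rw [← h1]
    have : ∫ y, (P'.rnDeriv Q' y).toReal • (f y)⁻¹ ∂Q' = ∫ y, (1:ℝ) ∂Q' := by
      refine integral_congr_ae ?_
      filter_upwards [hflb] with y hy
      have hpos : 0 < f y := lt_of_lt_of_le (Real.exp_pos _) hy
      simp only [smul_eq_mul]
      rw [mul_inv_cancel₀ hpos.ne']
    rw [this]; simp
  -- the m bound
  have hm_le : m / ε * Real.sinh ε ≤ Real.cosh ε - 1 := by
    have hchord : ∀ᵐ y ∂P', (f y)⁻¹ ≤ Real.cosh ε + (- Z y) / ε * Real.sinh ε := by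
      filter_upwards [hZbndP, hbndP] with y hy hfy
      have hpos : 0 < f y := lt_of_lt_of_le (Real.exp_pos _) hfy.1
      have : (f y)⁻¹ = Real.exp (-(Z y)) := by
        rw [← Real.log_inv, Real.exp_log (by positivity)]
      rw [this]
      exact aux_chord ε (-(Z y)) hε (by linarith [hy.2]) (by linarith [hy.1])
    have hint1 : Integrable (fun y => (f y)⁻¹) P' := by
      refine (integrable_const (Real.exp ε)).mono' (hf_meas.inv).aestronglyMeasurable ?_
      filter_upwards [hbndP] with y hy
      have hpos : 0 < f y := lt_of_lt_of_le (Real.exp_pos _) hy.1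
      rw [Real.norm_eq_abs, abs_of_nonneg (by positivity)]
      rw [inv_le_comm₀ hpos (Real.exp_pos _), ← Real.exp_neg]
      exact hy.1
    have hint2 : Integrable (fun y => Real.cosh ε + (- Z y) / ε * Real.sinh ε) P' := by
      apply (integrable_const (Real.cosh ε)).add
      exact ((hZint.neg.div_const ε).mul_const _)
    have hint2g : Integrable (fun y => (- Z y) / ε * Real.sinh ε) P' := by
      exact ((hZint.neg).div_const ε).mul_const _
    have := integral_mono_ae hint1 hint2 hchord
    rw [hinv_int] at this
    have heval : ∫ y, (Real.cosh ε + (- Z y) / ε * Real.sinh ε) ∂P'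
        = Real.cosh ε + (-m) / ε * Real.sinh ε := by
      rw [integral_add (integrable_const _) hint2g]
      rw [integral_mul_const, integral_div, integral_neg]
      simp [hm_def]
    rw [heval] at this
    have h2 : (-m) / ε * Real.sinh ε ≥ 1 - Real.cosh ε := by linarith
    have : m / ε * Real.sinh ε = -(((-m)) / ε * Real.sinh ε) := by ring
    rw [this]; linarith
  -- main integral bound
  have hmain : ∫ y, f y ^ l ∂Q' ≤ Real.exp ((a ^ 2 + a) * ε ^ 2 / 2) := by
    have hswitch : ∫ y, f y ^ l ∂Q' = ∫ y, f y ^ a ∂P' := by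
      have h1 : ∫ y, (P'.rnDeriv Q' y).toReal • (f y ^ a) ∂Q' = ∫ y, f y ^ a ∂P' :=
        integral_rnDeriv_smul hac
      rw [← h1]
      refine integral_congr_ae ?_
      filter_upwards [hflb] with y hy
      have hpos : 0 < f y := lt_of_lt_of_le (Real.exp_pos _) hy
      simp only [smul_eq_mul]
      calc f y ^ l = f y ^ (1 + a) := by rw [ha_def]; ring_nf
        _ = f y ^ (1:ℝ) * f y ^ a := Real.rpow_add hpos 1 a
        _ = f y * f y ^ a := by rw [Real.rpow_one]
    have hchord : ∀ᵐ y ∂P', f y ^ a ≤ Real.cosh (a * ε) + Z y / ε * Real.sinh (a * ε) := by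
      filter_upwards [hZbndP, hbndP] with y hy hfy
      have hpos : 0 < f y := lt_of_lt_of_le (Real.exp_pos _) hfy.1
      have heq : f y ^ a = Real.exp (a * Z y) := by
        rw [Real.rpow_def_of_pos hpos, mul_comm]
      rw [heq]
      have hch := aux_chord (a * ε) (a * Z y) (mul_pos ha hε)
        (by nlinarith [hy.1, hy.2]) (by nlinarith [hy.1, hy.2])
      have : a * Z y / (a * ε) = Z y / ε := by
        field_simp
      rwa [this] at hch
    have hint1 : Integrable (fun y => f y ^ a) P' := by
      refine (integrable_const (Real.exp (a * ε))).mono'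
        ((Real.continuous_rpow_const ha.le).measurable.comp hf_meas).aestronglyMeasurable ?_
      filter_upwards [hbndP] with y hy
      have hpos : 0 < f y := lt_of_lt_of_le (Real.exp_pos _) hy.1
      rw [Real.norm_eq_abs, abs_of_nonneg (Real.rpow_nonneg hpos.le a)]
      calc f y ^ a ≤ (Real.exp ε) ^ a := Real.rpow_le_rpow hpos.le hy.2 ha.le
        _ = Real.exp (ε * a) := by rw [← Real.exp_mul]
        _ = Real.exp (a * ε) := by rw [mul_comm]
    have hint2g : Integrable (fun y => Z y / ε * Real.sinh (a * ε)) P' := by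
      exact (hZint.div_const ε).mul_const _
    have hint2 : Integrable (fun y => Real.cosh (a * ε) + Z y / ε * Real.sinh (a * ε)) P' := by
      exact (integrable_const _).add hint2g
    have hle := integral_mono_ae hint1 hint2 hchord
    have heval : ∫ y, (Real.cosh (a * ε) + Z y / ε * Real.sinh (a * ε)) ∂P'
        = Real.cosh (a * ε) + m / ε * Real.sinh (a * ε) := by
      rw [integral_add (integrable_const _) hint2g]
      rw [integral_mul_const, integral_div]
      simp [hm_def]
    rw [hswitch]
    refine hle.trans (heval.le.trans ?_)
    have hstep : Real.cosh (a * ε) + m / ε * Real.sinh (a * ε)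
        ≤ Real.cosh (a * ε) + (Real.cosh ε - 1) / Real.sinh ε * Real.sinh (a * ε) := by
      have hm2 : m / ε ≤ (Real.cosh ε - 1) / Real.sinh ε := by
        rw [le_div_iff₀ hsinhε]
        exact hm_le
      nlinarith [hm2, hsinha.le]
    exact hstep.trans (aux_key a ε ha hε)
  -- positivity of the integral
  have hfl_int : Integrable (fun y => f y ^ l) Q' := by
    refine (integrable_const (Real.exp (l * ε))).mono'
      ((Real.continuous_rpow_const (by linarith : (0:ℝ) ≤ l)).measurable.comp hf_meas).aestronglyMeasurable ?_
    filter_upwards [hbnd] with y hy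
    have hpos : 0 < f y := lt_of_lt_of_le (Real.exp_pos _) hy.1
    rw [Real.norm_eq_abs, abs_of_nonneg (Real.rpow_nonneg hpos.le l)]
    calc f y ^ l ≤ (Real.exp ε) ^ l := Real.rpow_le_rpow hpos.le hy.2 (by linarith)
      _ = Real.exp (ε * l) := by rw [← Real.exp_mul]
      _ = Real.exp (l * ε) := by rw [mul_comm]
  have hpos_int : 0 < ∫ y, f y ^ l ∂Q' := by
    have hge : ∀ᵐ y ∂Q', Real.exp (-ε * l) ≤ f y ^ l := by
      filter_upwards [hbnd] with y hy
      calc Real.exp (-ε * l) = (Real.exp (-ε)) ^ l := by rw [← Real.exp_mul]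
        _ ≤ f y ^ l := Real.rpow_le_rpow (Real.exp_nonneg _) hy.1 (by linarith)
    have := integral_mono_ae (integrable_const _) hfl_int hge
    calc (0:ℝ) < Real.exp (-ε * l) := Real.exp_pos _
      _ = ∫ _, Real.exp (-ε * l) ∂Q' := by simp
      _ ≤ ∫ y, f y ^ l ∂Q' := this
  -- conclude
  rw [renyiDiv]
  have hlog : Real.log (∫ y, f y ^ l ∂Q') ≤ (a ^ 2 + a) * ε ^ 2 / 2 := by
    have := Real.log_le_log hpos_int hmain
    rwa [Real.log_exp] at this
  have hfactor : (0:ℝ) ≤ (l - 1)⁻¹ := by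
    rw [inv_nonneg]; linarith
  calc (l - 1)⁻¹ * Real.log (∫ y, f y ^ l ∂Q')
      ≤ (l - 1)⁻¹ * ((a ^ 2 + a) * ε ^ 2 / 2) := by
        exact mul_le_mul_of_nonneg_left hlog hfactor
    _ = ε ^ 2 / 2 * l := by
        rw [ha_def]
        have hl1 : l - 1 ≠ 0 := sub_ne_zero.mpr (by linarith)
        field_simp
        ring

/-- Symmetry of the conclusion. -/
lemma aux_symm {Y : Type*} [MeasurableSpace Y] {P Q : Measure Y} {ρ δ : ℝ}
    (h : IsApproxCDPPair Q P ρ δ) : IsApproxCDPPair P Q ρ δ := by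
  obtain ⟨Q', Q'', P', P'', h1, h2, h3, h4, h5, h6, h7⟩ := h
  exact ⟨P', P'', Q', Q'', h3, h4, h1, h2, h6, h5, fun l hl => ⟨(h7 l hl).2, (h7 l hl).1⟩⟩

/-- The normalized withDensity measure is a probability measure. -/
lemma aux_prob {Y : Type*} [MeasurableSpace Y] (μ : Measure Y) (u : Y → ℝ≥0∞)
    (hu : Measurable u) (mm : ℝ≥0∞) (hum : ∫⁻ y, u y ∂μ = mm) (hmm0 : mm ≠ 0)
    (hmmt : mm ≠ ∞) : IsProbabilityMeasure (μ.withDensity (fun y => u y / mm)) := by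
  constructor
  rw [withDensity_apply _ MeasurableSet.univ, Measure.restrict_univ]
  simp only [div_eq_mul_inv]
  rw [lintegral_mul_const _ hu, hum, ENNReal.mul_inv_cancel hmm0 hmmt]

/-- Composition of the two normalized densities. -/
lemma aux_wd_pair {Y : Type*} [MeasurableSpace Y] (μ : Measure Y) (u v : Y → ℝ≥0∞)
    (hu : Measurable u) (hv : Measurable v) (mm : ℝ≥0∞)
    (hum : ∫⁻ y, u y ∂μ = mm) (hvm : ∫⁻ y, v y ∂μ = mm) (hmmt : mm ≠ ∞)
    (k : ℝ≥0∞) (huv : ∀ y, u y ≤ k * v y) :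
    μ.withDensity (fun y => u y / mm)
      = (μ.withDensity (fun y => v y / mm)).withDensity (fun y => u y / v y) := by
  rw [← withDensity_mul μ (g := fun y => u y / v y) (hv.div_const mm) (hu.div hv)]
  apply withDensity_congr_ae
  have hvf : ∀ᵐ y ∂μ, v y < ∞ := ae_lt_top hv (by rw [hvm]; exact hmmt)
  filter_upwards [hvf] with y hvy
  by_cases hv0 : v y = 0
  · have hu0 : u y = 0 := le_antisymm (by simpa [hv0] using huv y) zero_le
    simp [hv0, hu0]
  · have : v y / mm * (u y / v y) = (v y * (v y)⁻¹) * (u y * mm⁻¹) := by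
      simp only [div_eq_mul_inv]; ring
    rw [Pi.mul_apply]
    rw [this, ENNReal.mul_inv_cancel hv0 hvy.ne, one_mul, div_eq_mul_inv]

/-- Rényi divergence bound for the normalized pair. -/
lemma aux_bounds_pair {Y : Type*} [MeasurableSpace Y] (μ : Measure Y) (u v : Y → ℝ≥0∞)
    (hu : Measurable u) (hv : Measurable v) (mm : ℝ≥0∞) (hmm0 : mm ≠ 0) (hmmt : mm ≠ ∞)
    (hum : ∫⁻ y, u y ∂μ = mm) (hvm : ∫⁻ y, v y ∂μ = mm)
    (ε : ℝ) (hε : 0 < ε)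
    (huv : ∀ y, u y ≤ ENNReal.ofReal (Real.exp ε) * v y)
    (hvu : ∀ y, v y ≤ ENNReal.ofReal (Real.exp ε) * u y) :
    ∀ l : ℝ, 1 < l →
      renyiDiv (μ.withDensity (fun y => u y / mm)) (μ.withDensity (fun y => v y / mm)) l
        ≤ ε ^ 2 / 2 * l := by
  set k : ℝ≥0∞ := ENNReal.ofReal (Real.exp ε) with hk_def
  have hk0 : k ≠ 0 := by
    simp [hk_def, ENNReal.ofReal_eq_zero, not_le, Real.exp_pos]
  have hkt : k ≠ ∞ := ENNReal.ofReal_ne_top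
  set P' := μ.withDensity (fun y => u y / mm) with hP'_def
  set Q' := μ.withDensity (fun y => v y / mm) with hQ'_def
  haveI : IsProbabilityMeasure P' := aux_prob μ u hu mm hum hmm0 hmmt
  haveI : IsProbabilityMeasure Q' := aux_prob μ v hv mm hvm hmm0 hmmt
  have hwd : P' = Q'.withDensity (fun y => u y / v y) :=
    aux_wd_pair μ u v hu hv mm hum hvm hmmt k huv
  have hac : P' ≪ Q' := by
    rw [hwd]; exact withDensity_absolutelyContinuous _ _
  have hrn : P'.rnDeriv Q' =ᵐ[Q'] (fun y => u y / v y) := by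
    rw [hwd]; exact Measure.rnDeriv_withDensity Q' (hu.div hv)
  have hboth : ∀ᵐ y ∂Q', u y / v y ≤ k ∧ k⁻¹ ≤ u y / v y := by
    rw [hQ'_def, ae_withDensity_iff (hv.div_const mm)]
    have hvf : ∀ᵐ y ∂μ, v y < ∞ := ae_lt_top hv (by rw [hvm]; exact hmmt)
    filter_upwards [hvf] with y hvy hne
    have hv0 : v y ≠ 0 := by
      intro h; apply hne; simp [h]
    constructor
    · exact (ENNReal.div_le_iff_le_mul (Or.inl hv0) (Or.inl hvy.ne)).2
        (huv y)
    · rw [ENNReal.le_div_iff_mul_le (Or.inl hv0) (Or.inl hvy.ne)]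
      calc k⁻¹ * v y ≤ k⁻¹ * (k * u y) := mul_le_mul_right (hvu y) _
        _ = u y := by rw [← mul_assoc, ENNReal.inv_mul_cancel hk0 hkt, one_mul]
  have hub : ∀ᵐ y ∂Q', P'.rnDeriv Q' y ≤ ENNReal.ofReal (Real.exp ε) := by
    filter_upwards [hrn, hboth] with y h1 h2
    rw [h1]; exact h2.1
  have hlb : ∀ᵐ y ∂Q', ENNReal.ofReal (Real.exp (-ε)) ≤ P'.rnDeriv Q' y := by
    filter_upwards [hrn, hboth] with y h1 h2
    rw [h1]
    have : ENNReal.ofReal (Real.exp (-ε)) = k⁻¹ := by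
      rw [hk_def, Real.exp_neg, ENNReal.ofReal_inv_of_pos (Real.exp_pos ε)]
    rw [this]; exact h2.2
  exact aux_renyi P' Q' ε hε hac hub hlb

/-- Decomposition of `P` into the normalized trimmed part and a remainder. -/
lemma aux_decomp {Y : Type*} [MeasurableSpace Y] (μ : Measure Y) (P : Measure Y)
    [IsProbabilityMeasure P] (δ' : ℝ≥0∞) (hδ'0 : δ' ≠ 0) (hδ'1 : δ' < 1)
    (p u : Y → ℝ≥0∞) (hp : Measurable p) (hu : Measurable u)
    (hP : μ.withDensity p = P) (hup : ∀ y, u y ≤ p y)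
    (mm : ℝ≥0∞) (hum : ∫⁻ y, u y ∂μ = mm) (hm1 : 1 - δ' ≤ mm) (hm2 : mm ≤ 1) :
    ∃ P'' : Measure Y, IsProbabilityMeasure P'' ∧
      P = (1 - δ') • (μ.withDensity (fun y => u y / mm)) + δ' • P'' := by
  have hδ't : δ' ≠ ∞ := hδ'1.ne_top
  have h1δ : (1:ℝ≥0∞) - δ' ≠ 0 := by
    simp only [ne_eq, tsub_eq_zero_iff_le, not_le]
    exact hδ'1
  have hmm0 : mm ≠ 0 := by
    intro h; rw [h] at hm1
    exact h1δ (le_antisymm hm1 zero_le)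
  have hmmt : mm ≠ ∞ := (lt_of_le_of_lt hm2 ENNReal.one_lt_top).ne
  have hpint : ∫⁻ y, p y ∂μ = 1 := by
    have := congrArg (fun ν : Measure Y => ν Set.univ) hP
    simpa [withDensity_apply _ MeasurableSet.univ] using this
  set c : ℝ≥0∞ := (1 - δ') / mm with hc_def
  have hc1 : c ≤ 1 := ENNReal.div_le_of_le_mul (by rw [one_mul]; exact hm1)
  have hct : c ≠ ∞ := (lt_of_le_of_lt hc1 ENNReal.one_lt_top).ne
  have hcu_le : ∀ y, c * u y ≤ p y := fun y =>
    le_trans (by calc c * u y ≤ 1 * u y := mul_le_mul_left hc1 _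
                  _ = u y := one_mul _) (hup y)
  have hcu_meas : Measurable (fun y => c * u y) := hu.const_mul c
  have hcu_int : ∫⁻ y, c * u y ∂μ = 1 - δ' := by
    rw [lintegral_const_mul c hu, hum, hc_def, ENNReal.div_mul_cancel hmm0 hmmt]
  refine ⟨μ.withDensity (fun y => (p y - c * u y) / δ'), ?_, ?_⟩
  · constructor
    rw [withDensity_apply _ MeasurableSet.univ, Measure.restrict_univ]
    simp only [div_eq_mul_inv]
    rw [lintegral_mul_const _ (f := fun y => p y - c * u y) (hp.sub hcu_meas)]
    rw [lintegral_sub hcu_meas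
      (by rw [hcu_int]; exact ENNReal.sub_ne_top ENNReal.one_ne_top)
      (Filter.Eventually.of_forall hcu_le)]
    rw [hpint, hcu_int, ENNReal.sub_sub_cancel ENNReal.one_ne_top hδ'1.le,
      ENNReal.mul_inv_cancel hδ'0 hδ't]
  · rw [← hP]
    have hd1 : (1 - δ') • (μ.withDensity fun y => u y / mm)
        = μ.withDensity (fun y => (1 - δ') * (u y / mm)) := by
      rw [← withDensity_smul _ (hu.div_const mm)]; rfl
    have hd2 : δ' • (μ.withDensity fun y => (p y - c * u y) / δ')
        = μ.withDensity (fun y => δ' * ((p y - c * u y) / δ')) := by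
      rw [← withDensity_smul _ (f := fun y => (p y - c * u y) / δ') ((hp.sub hcu_meas).div_const δ')]; rfl
    rw [hd1, hd2, ← withDensity_add_left ((hu.div_const mm).const_mul (1 - δ'))]
    refine withDensity_congr_ae (Filter.Eventually.of_forall fun y => ?_)
    have h1 : (1 - δ') * (u y / mm) = c * u y := by
      rw [hc_def]; simp only [div_eq_mul_inv]; ring
    have h2 : δ' * ((p y - c * u y) / δ') = p y - c * u y :=
      ENNReal.mul_div_cancel hδ'0 hδ't
    show p y = (1 - δ') * (u y / mm) + δ' * ((p y - c * u y) / δ')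
    rw [h1, h2, add_tsub_cancel_of_le (hcu_le y)]

/-- Mass lower bound for the trimmed density. -/
lemma aux_mass {Y : Type*} [MeasurableSpace Y] (μ : Measure Y) (P Q : Measure Y)
    [IsProbabilityMeasure P] (p q : Y → ℝ≥0∞) (hp : Measurable p) (hq : Measurable q)
    (hP : μ.withDensity p = P) (hQ : μ.withDensity q = Q) (k δ' : ℝ≥0∞)
    (hPQ : ∀ S : Set Y, MeasurableSet S → P S ≤ k * Q S + δ') :
    1 ≤ (∫⁻ y, min (p y) (k * q y) ∂μ) + δ' := by
  set A : Set Y := {y | k * q y < p y} with hA_def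
  have hA : MeasurableSet A := measurableSet_lt (hq.const_mul k) hp
  have hsplit : ∫⁻ y, min (p y) (k * q y) ∂μ
      = (∫⁻ y in A, min (p y) (k * q y) ∂μ) + ∫⁻ y in Aᶜ, min (p y) (k * q y) ∂μ :=
    (lintegral_add_compl _ hA).symm
  have h2 : ∫⁻ y in A, min (p y) (k * q y) ∂μ = k * Q A := by
    rw [setLIntegral_congr_fun hA (fun y hy =>
      min_eq_right (le_of_lt hy))]
    rw [lintegral_const_mul _ hq, ← hQ, withDensity_apply _ hA]
  have h3 : ∫⁻ y in Aᶜ, min (p y) (k * q y) ∂μ = P Aᶜ := by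
    rw [setLIntegral_congr_fun hA.compl (fun y hy =>
      min_eq_left (not_lt.1 hy))]
    rw [← hP, withDensity_apply _ hA.compl]
  have h4 : P A + P Aᶜ = 1 := by
    rw [measure_add_measure_compl hA, measure_univ]
  calc (1:ℝ≥0∞) = P A + P Aᶜ := h4.symm
    _ ≤ (k * Q A + δ') + P Aᶜ := add_le_add_left (hPQ A hA) _
    _ = ((k * Q A) + P Aᶜ) + δ' := by ring
    _ = (∫⁻ y, min (p y) (k * q y) ∂μ) + δ' := by rw [hsplit, h2, h3]

/-- Assembly given suitable trimmed densities. -/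
lemma aux_cdp_of_densities {Y : Type*} [MeasurableSpace Y] (μ : Measure Y) (P Q : Measure Y)
    [IsProbabilityMeasure P] [IsProbabilityMeasure Q] (ε δ : ℝ) (hε : 0 < ε)
    (hδ0 : 0 < δ) (hδ1 : δ < 1) (p q u v : Y → ℝ≥0∞)
    (hp : Measurable p) (hq : Measurable q) (hu : Measurable u) (hv : Measurable v)
    (hP : μ.withDensity p = P) (hQ : μ.withDensity q = Q)
    (hup : ∀ y, u y ≤ p y) (hvq : ∀ y, v y ≤ q y)
    (huv : ∀ y, u y ≤ ENNReal.ofReal (Real.exp ε) * v y)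
    (hvu : ∀ y, v y ≤ ENNReal.ofReal (Real.exp ε) * u y)
    (mm : ℝ≥0∞) (hum : ∫⁻ y, u y ∂μ = mm) (hvm : ∫⁻ y, v y ∂μ = mm)
    (hm1 : 1 - ENNReal.ofReal δ ≤ mm) (hm2 : mm ≤ 1) :
    IsApproxCDPPair P Q (ε ^ 2 / 2) δ := by
  set δ' : ℝ≥0∞ := ENNReal.ofReal δ with hδ'_def
  have hδ'0 : δ' ≠ 0 := by simp [hδ'_def, ENNReal.ofReal_eq_zero, not_le, hδ0]
  have hδ'1 : δ' < 1 := by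
    rw [hδ'_def, ← ENNReal.ofReal_one]
    exact (ENNReal.ofReal_lt_ofReal_iff one_pos).2 hδ1
  have hmm0 : mm ≠ 0 := by
    intro h; rw [h] at hm1
    have : (1:ℝ≥0∞) - δ' = 0 := le_antisymm hm1 zero_le
    rw [tsub_eq_zero_iff_le] at this
    exact absurd this (not_le.2 hδ'1)
  have hmmt : mm ≠ ∞ := (lt_of_le_of_lt hm2 ENNReal.one_lt_top).ne
  obtain ⟨P'', hP''p, hPdec⟩ := aux_decomp μ P δ' hδ'0 hδ'1 p u hp hu hP hup mm hum hm1 hm2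
  obtain ⟨Q'', hQ''p, hQdec⟩ := aux_decomp μ Q δ' hδ'0 hδ'1 q v hq hv hQ hvq mm hvm hm1 hm2
  have hofr : ENNReal.ofReal (1 - δ) = 1 - δ' := by
    rw [hδ'_def, ENNReal.ofReal_sub _ hδ0.le, ENNReal.ofReal_one]
  refine ⟨μ.withDensity (fun y => u y / mm), P'', μ.withDensity (fun y => v y / mm), Q'',
    aux_prob μ u hu mm hum hmm0 hmmt, hP''p, aux_prob μ v hv mm hvm hmm0 hmmt, hQ''p,
    ?_, ?_, ?_⟩
  · rw [hofr]; exact hPdec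
  · rw [hofr]; exact hQdec
  · intro l hl
    exact ⟨aux_bounds_pair μ u v hu hv mm hmm0 hmmt hum hvm ε hε huv hvu l hl,
      aux_bounds_pair μ v u hv hu mm hmm0 hmmt hvm hum ε hε hvu huv l hl⟩

/-- The main construction, assuming the trimmed mass on the `P` side is the smaller one. -/
lemma aux_half {Y : Type*} [MeasurableSpace Y] (μ : Measure Y) (P Q : Measure Y)
    [IsProbabilityMeasure P] [IsProbabilityMeasure Q] (ε δ : ℝ) (hε : 0 < ε)
    (hδ0 : 0 < δ) (hδ1 : δ < 1) (p q : Y → ℝ≥0∞)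
    (hp : Measurable p) (hq : Measurable q)
    (hP : μ.withDensity p = P) (hQ : μ.withDensity q = Q)
    (hPQ : ∀ S : Set Y, MeasurableSet S →
      P S ≤ ENNReal.ofReal (Real.exp ε) * Q S + ENNReal.ofReal δ)
    (hc : ∫⁻ y, min (p y) (ENNReal.ofReal (Real.exp ε) * q y) ∂μ
        ≤ ∫⁻ y, min (q y) (ENNReal.ofReal (Real.exp ε) * p y) ∂μ) :
    IsApproxCDPPair P Q (ε ^ 2 / 2) δ := by
  set k : ℝ≥0∞ := ENNReal.ofReal (Real.exp ε) with hk_def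
  have hk0 : k ≠ 0 := by simp [hk_def, ENNReal.ofReal_eq_zero, not_le, Real.exp_pos]
  have hkt : k ≠ ∞ := ENNReal.ofReal_ne_top
  have hk1 : 1 ≤ k := by
    rw [hk_def, ← ENNReal.ofReal_one]
    exact ENNReal.ofReal_le_ofReal (Real.one_le_exp hε.le)
  set pt : Y → ℝ≥0∞ := fun y => min (p y) (k * q y) with hpt_def
  set qt : Y → ℝ≥0∞ := fun y => min (q y) (k * p y) with hqt_def
  have hpt : Measurable pt := hp.min (hq.const_mul k)
  have hqt : Measurable qt := hq.min (hp.const_mul k)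
  have hpt_le : ∀ y, pt y ≤ p y := fun y => min_le_left _ _
  have hqt_le : ∀ y, qt y ≤ q y := fun y => min_le_left _ _
  have hptk : ∀ y, pt y ≤ k * qt y := by
    intro y
    by_cases h : q y ≤ k * p y
    · rw [hqt_def]; simp only [min_eq_left h]
      exact min_le_right _ _
    · push_neg at h
      rw [hqt_def]; simp only [min_eq_right h.le]
      calc pt y ≤ p y := hpt_le y
        _ = 1 * (1 * p y) := by rw [one_mul, one_mul]
        _ ≤ k * (k * p y) := mul_le_mul' hk1 (mul_le_mul' hk1 le_rfl)
  have hqtk : ∀ y, qt y ≤ k * pt y := by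
    intro y
    by_cases h : p y ≤ k * q y
    · rw [hpt_def]; simp only [min_eq_left h]
      exact min_le_right _ _
    · push_neg at h
      rw [hpt_def]; simp only [min_eq_right h.le]
      calc qt y ≤ q y := hqt_le y
        _ = 1 * (1 * q y) := by rw [one_mul, one_mul]
        _ ≤ k * (k * q y) := mul_le_mul' hk1 (mul_le_mul' hk1 le_rfl)
  set mP : ℝ≥0∞ := ∫⁻ y, pt y ∂μ with hmP_def
  set mQ : ℝ≥0∞ := ∫⁻ y, qt y ∂μ with hmQ_def
  have hpint : ∫⁻ y, p y ∂μ = 1 := by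
    have := congrArg (fun ν : Measure Y => ν Set.univ) hP
    simpa [withDensity_apply _ MeasurableSet.univ] using this
  have hqint : ∫⁻ y, q y ∂μ = 1 := by
    have := congrArg (fun ν : Measure Y => ν Set.univ) hQ
    simpa [withDensity_apply _ MeasurableSet.univ] using this
  have hmP1 : mP ≤ 1 := by rw [hmP_def, ← hpint]; exact lintegral_mono hpt_le
  have hmQ1 : mQ ≤ 1 := by rw [hmQ_def, ← hqint]; exact lintegral_mono hqt_le
  have hmPt : mP ≠ ∞ := (lt_of_le_of_lt hmP1 ENNReal.one_lt_top).ne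
  have hmQt : mQ ≠ ∞ := (lt_of_le_of_lt hmQ1 ENNReal.one_lt_top).ne
  have hmass : 1 ≤ mP + ENNReal.ofReal δ :=
    aux_mass μ P Q p q hp hq hP hQ k (ENNReal.ofReal δ) hPQ
  have hm1 : 1 - ENNReal.ofReal δ ≤ mP := tsub_le_iff_right.2 hmass
  -- now construct v
  have hkinv1 : k⁻¹ ≤ 1 := ENNReal.inv_le_one.2 hk1
  have hkpt_le : ∀ y, k⁻¹ * pt y ≤ qt y := fun y => by
    calc k⁻¹ * pt y ≤ k⁻¹ * (k * qt y) := mul_le_mul_right (hptk y) _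
      _ = qt y := by rw [← mul_assoc, ENNReal.inv_mul_cancel hk0 hkt, one_mul]
  set cc : ℝ≥0∞ := (mP - k⁻¹ * mP) / (mQ - k⁻¹ * mP) with hcc_def
  have hcc1 : cc ≤ 1 :=
    ENNReal.div_le_of_le_mul (by rw [one_mul]; exact tsub_le_tsub_right hc _)
  set v : Y → ℝ≥0∞ := fun y => k⁻¹ * pt y + cc * (qt y - k⁻¹ * pt y) with hv_def
  have hv : Measurable v := (hpt.const_mul _).add ((hqt.sub (hpt.const_mul _)).const_mul _)
  have hv_le_qt : ∀ y, v y ≤ qt y := by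
    intro y
    calc v y ≤ k⁻¹ * pt y + 1 * (qt y - k⁻¹ * pt y) :=
          add_le_add_right (mul_le_mul_left hcc1 _) _
      _ = k⁻¹ * pt y + (qt y - k⁻¹ * pt y) := by rw [one_mul]
      _ = qt y := add_tsub_cancel_of_le (hkpt_le y)
  have hkinvP : k⁻¹ * mP ≤ mP := by
    calc k⁻¹ * mP ≤ 1 * mP := mul_le_mul_left hkinv1 _
      _ = mP := one_mul _
  have hvm : ∫⁻ y, v y ∂μ = mP := by
    rw [hv_def]
    rw [lintegral_add_left (hpt.const_mul _)]
    rw [lintegral_const_mul _ hpt, lintegral_const_mul _ (f := fun y => qt y - k⁻¹ * pt y) (hqt.sub (hpt.const_mul _))]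
    rw [lintegral_sub (hpt.const_mul _)
      (by rw [lintegral_const_mul _ hpt]
          exact (lt_of_le_of_lt (le_trans hkinvP hmP1) ENNReal.one_lt_top).ne)
      (Filter.Eventually.of_forall hkpt_le)]
    rw [lintegral_const_mul _ hpt, ← hmP_def, ← hmQ_def]
    by_cases hdz : mQ - k⁻¹ * mP = 0
    · have h1 : mQ ≤ k⁻¹ * mP := tsub_eq_zero_iff_le.1 hdz
      have h2 : mP = k⁻¹ * mP := le_antisymm (hc.trans h1) hkinvP
      rw [hdz, mul_zero, add_zero]
      exact h2.symm
    · have hfin : mQ - k⁻¹ * mP ≠ ∞ :=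
        (lt_of_le_of_lt (le_trans tsub_le_self hmQ1) ENNReal.one_lt_top).ne
      rw [hcc_def, ENNReal.div_mul_cancel hdz hfin]
      exact add_tsub_cancel_of_le hkinvP
  have hu_le_kv : ∀ y, pt y ≤ k * v y := by
    intro y
    calc pt y = k * (k⁻¹ * pt y) := by
          rw [← mul_assoc, ENNReal.mul_inv_cancel hk0 hkt, one_mul]
      _ ≤ k * v y := mul_le_mul_right le_self_add _
  have hv_le_ku : ∀ y, v y ≤ k * pt y := fun y => (hv_le_qt y).trans (hqtk y)
  exact aux_cdp_of_densities μ P Q ε δ hε hδ0 hδ1 p q pt v hp hq hpt hv hP hQ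
    hpt_le (fun y => (hv_le_qt y).trans (hqt_le y)) hu_le_kv hv_le_ku
    mP hmP_def.symm hvm hm1 hmP1

/-- Upper bound on the RN derivative under a pointwise domination `P ≤ k • Q`. -/
lemma aux_pure_ub {Y : Type*} [MeasurableSpace Y] (P Q : Measure Y)
    [IsProbabilityMeasure P] [IsProbabilityMeasure Q] (k : ℝ≥0∞) (hk0 : k ≠ 0) (hkt : k ≠ ∞)
    (hle : P ≤ k • Q) : ∀ᵐ y ∂Q, P.rnDeriv Q y ≤ k := by
  haveI : IsFiniteMeasure (k • Q) := by
    constructor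
    rw [Measure.smul_apply, smul_eq_mul, measure_univ, mul_one]
    exact hkt.lt_top
  have h1 : P.rnDeriv (k • Q) ≤ᵐ[k • Q] 1 := Measure.rnDeriv_le_one_of_le hle
  have h1' : P.rnDeriv (k • Q) ≤ᵐ[Q] 1 := by
    rw [Filter.EventuallyLE, ae_iff] at h1 ⊢
    rw [Measure.smul_apply, smul_eq_mul, mul_eq_zero] at h1
    exact h1.resolve_left hk0
  have h2 : P.rnDeriv (k • Q) =ᵐ[Q] k⁻¹ • P.rnDeriv Q :=
    Measure.rnDeriv_smul_right_of_ne_top' P Q hk0 hkt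
  filter_upwards [h1', h2] with y hy1 hy2
  rw [hy2] at hy1
  simp only [Pi.smul_apply, smul_eq_mul] at hy1
  calc P.rnDeriv Q y = k * (k⁻¹ * P.rnDeriv Q y) := by
        rw [← mul_assoc, ENNReal.mul_inv_cancel hk0 hkt, one_mul]
    _ ≤ k * 1 := mul_le_mul_right hy1 _
    _ = k := mul_one _

/-- If a pair `(P, Q)` of probability measures is `(ε, δ)`-DP (in both directions), then it
satisfies `δ`-approximate `ε²/2`-CDP. -/
theorem dp_implies_approx_cdp {Y : Type*} [MeasurableSpace Y] (P Q : Measure Y)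
    [IsProbabilityMeasure P] [IsProbabilityMeasure Q] (ε δ : ℝ) (hε : 0 < ε)
    (hδ0 : 0 ≤ δ) (hδ1 : δ < 1)
    (hPQ : ∀ S : Set Y, MeasurableSet S →
      P S ≤ ENNReal.ofReal (Real.exp ε) * Q S + ENNReal.ofReal δ)
    (hQP : ∀ S : Set Y, MeasurableSet S →
      Q S ≤ ENNReal.ofReal (Real.exp ε) * P S + ENNReal.ofReal δ) :
    IsApproxCDPPair P Q (ε ^ 2 / 2) δ := by
  set k : ℝ≥0∞ := ENNReal.ofReal (Real.exp ε) with hk_def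
  have hk0 : k ≠ 0 := by simp [hk_def, ENNReal.ofReal_eq_zero, not_le, Real.exp_pos]
  have hkt : k ≠ ∞ := ENNReal.ofReal_ne_top
  by_cases hδz : δ = 0
  · -- pure DP case
    subst hδz
    have hPQ' : P ≤ k • Q := by
      rw [Measure.le_iff]
      intro S hS
      have := hPQ S hS
      simpa [Measure.smul_apply, smul_eq_mul] using this
    have hQP' : Q ≤ k • P := by
      rw [Measure.le_iff]
      intro S hS
      have := hQP S hS
      simpa [Measure.smul_apply, smul_eq_mul] using this
    have hacPQ : P ≪ Q := by
      refine Measure.AbsolutelyContinuous.mk fun S hS h0 => ?_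
      have := hPQ S hS
      simpa [h0] using this
    have hacQP : Q ≪ P := by
      refine Measure.AbsolutelyContinuous.mk fun S hS h0 => ?_
      have := hQP S hS
      simpa [h0] using this
    have hkinv : ENNReal.ofReal (Real.exp (-ε)) = k⁻¹ := by
      rw [hk_def, Real.exp_neg, ENNReal.ofReal_inv_of_pos (Real.exp_pos ε)]
    have hub1 : ∀ᵐ y ∂Q, P.rnDeriv Q y ≤ k := aux_pure_ub P Q k hk0 hkt hPQ'
    have hub2 : ∀ᵐ y ∂P, Q.rnDeriv P y ≤ k := aux_pure_ub Q P k hk0 hkt hQP'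
    have hlb1 : ∀ᵐ y ∂Q, ENNReal.ofReal (Real.exp (-ε)) ≤ P.rnDeriv Q y := by
      have hinv : (Q.rnDeriv P)⁻¹ =ᵐ[Q] P.rnDeriv Q := Measure.inv_rnDeriv hacQP
      filter_upwards [hacQP.ae_le hub2, hinv] with y hy1 hy2
      rw [hkinv, ← hy2]
      exact ENNReal.inv_le_inv.2 hy1
    have hlb2 : ∀ᵐ y ∂P, ENNReal.ofReal (Real.exp (-ε)) ≤ Q.rnDeriv P y := by
      have hinv : (P.rnDeriv Q)⁻¹ =ᵐ[P] Q.rnDeriv P := Measure.inv_rnDeriv hacPQ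
      filter_upwards [hacPQ.ae_le hub1, hinv] with y hy1 hy2
      rw [hkinv, ← hy2]
      exact ENNReal.inv_le_inv.2 hy1
    refine ⟨P, P, Q, Q, inferInstance, inferInstance, inferInstance, inferInstance, ?_, ?_, ?_⟩
    · simp
    · simp
    · intro l hl
      exact ⟨aux_renyi P Q ε hε hacPQ hub1 hlb1 l hl,
        aux_renyi Q P ε hε hacQP hub2 hlb2 l hl⟩
  · -- approximate case
    have hδpos : 0 < δ := lt_of_le_of_ne hδ0 (Ne.symm hδz)
    set μ : Measure Y := P + Q with hμ_def
    have hPμ : P ≪ μ := Measure.absolutelyContinuous_of_le (Measure.le_add_right le_rfl)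
    have hQμ : Q ≪ μ := Measure.absolutelyContinuous_of_le (Measure.le_add_left le_rfl)
    set p : Y → ℝ≥0∞ := P.rnDeriv μ with hp_def
    set q : Y → ℝ≥0∞ := Q.rnDeriv μ with hq_def
    have hp : Measurable p := Measure.measurable_rnDeriv _ _
    have hq : Measurable q := Measure.measurable_rnDeriv _ _
    have hP : μ.withDensity p = P := Measure.withDensity_rnDeriv_eq P μ hPμ
    have hQ : μ.withDensity q = Q := Measure.withDensity_rnDeriv_eq Q μ hQμ
    rcases le_total (∫⁻ y, min (p y) (k * q y) ∂μ) (∫⁻ y, min (q y) (k * p y) ∂μ) with hc | hc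
    · exact aux_half μ P Q ε δ hε hδpos hδ1 p q hp hq hP hQ hPQ hc
    · exact aux_symm (aux_half μ Q P ε δ hε hδpos hδ1 q p hq hp hQ hP hQP hc)
end

section
/- Let σ > 0, d ∈ ℕ, and μ, μ′ ∈ ℝ^d with ‖μ − μ′‖₂ ≤ Δ. Let P = N(μ, σ²·I_d) and Q = N(μ′, σ²·I_d) be the corresponding multivariate Gaussian measures on ℝ^d. Then for all λ > 1, D_λ(P‖Q) = λ·‖μ − μ′‖₂²/(2σ²) ≤ λ·Δ²/(2σ²). In particular, with σ² = Δ²/(2ρ), the Gaussian mechanism M(x) = f(x) + N(0, σ²·I_d), for f with ℓ₂-sensitivity Δ, satisfies D_λ between its output distributions on any neighboring inputs at most ρλ for all λ > 1 (ρ-CDP). -/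
open MeasureTheory ProbabilityTheory Real
open scoped NNReal ENNReal

theorem lintegral_pi_prod' {n : ℕ} {E : Fin n → Type*} [∀ i, MeasurableSpace (E i)]
    (μ : ∀ i, Measure (E i)) [∀ i, SigmaFinite (μ i)]
    (f : (i : Fin n) → E i → ENNReal) (hf : ∀ i, Measurable (f i)) :
    ∫⁻ x : (i : Fin n) → E i, ∏ i, f i (x i) ∂Measure.pi μ = ∏ i, ∫⁻ x, f i x ∂μ i := by
  induction n with
  | zero => simp [Measure.pi_empty_univ]
  | succ n n_ih =>
      have h := (measurePreserving_piFinSuccAbove μ 0)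
      rw [← (h.symm).lintegral_comp_emb (MeasurableEquiv.measurableEmbedding _)]
      simp_rw [MeasurableEquiv.piFinSuccAbove_symm_apply, Fin.insertNthEquiv,
        Fin.prod_univ_succ, Fin.insertNth_zero, Equiv.coe_fn_mk, Fin.zero_succAbove]
      simp only [Fin.cons_zero, Fin.cons_succ]
      rw [← n_ih (fun i => μ i.succ) (fun i => f i.succ) (fun i => hf _)]
      exact lintegral_prod_mul (ν := Measure.pi fun j : Fin n => μ j.succ) (hf 0).aemeasurable
        (Finset.measurable_prod Finset.univ
          (fun (i : Fin n) _ => (hf i.succ).comp (measurable_pi_apply i))).aemeasurable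

theorem integral_pi_prod' {n : ℕ} {E : Fin n → Type*} [∀ i, MeasurableSpace (E i)]
    (μ : ∀ i, Measure (E i)) [∀ i, SigmaFinite (μ i)]
    (f : (i : Fin n) → E i → ℝ) :
    ∫ x : (i : Fin n) → E i, ∏ i, f i (x i) ∂Measure.pi μ = ∏ i, ∫ x, f i x ∂μ i := by
  induction n with
  | zero => simp [Measure.pi_empty_univ, Measure.real]
  | succ n n_ih =>
      have h := (measurePreserving_piFinSuccAbove μ 0)
      rw [← (h.symm).integral_comp']
      simp_rw [MeasurableEquiv.piFinSuccAbove_symm_apply, Fin.insertNthEquiv,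
        Fin.prod_univ_succ, Fin.insertNth_zero, Equiv.coe_fn_mk, Fin.zero_succAbove]
      simp only [Fin.cons_zero, Fin.cons_succ]
      rw [← n_ih (fun i => μ i.succ) (fun i => f i.succ)]
      exact integral_prod_mul (μ := μ 0) (ν := Measure.pi fun j : Fin n => μ j.succ) (f := f 0)
        (g := fun y : (j : Fin n) → E j.succ => ∏ i, f i.succ (y i))

theorem pi_withDensity' {n : ℕ} {E : Fin n → Type*} [∀ i, MeasurableSpace (E i)]
    (ν : ∀ i, Measure (E i)) [∀ i, SigmaFinite (ν i)]
    (φ : (i : Fin n) → E i → ENNReal) (hφ : ∀ i, Measurable (φ i))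
    [∀ i, SigmaFinite ((ν i).withDensity (φ i))] :
    Measure.pi (fun i => (ν i).withDensity (φ i))
      = (Measure.pi ν).withDensity (fun x => ∏ i, φ i (x i)) := by
  refine Measure.pi_eq (μ := fun i => (ν i).withDensity (φ i))
    (μ' := (Measure.pi ν).withDensity fun x => ∏ i, φ i (x i)) fun s hs => ?_
  rw [withDensity_apply _ (MeasurableSet.univ_pi hs), ← lintegral_indicator
    (MeasurableSet.univ_pi hs)]
  have heq : ∀ x : (i : Fin n) → E i,
      (Set.pi Set.univ s).indicator (fun x => ∏ i, φ i (x i)) x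
        = ∏ i, (s i).indicator (φ i) (x i) := by
    intro x
    by_cases hx : x ∈ Set.pi Set.univ s
    · rw [Set.indicator_of_mem hx]
      exact Finset.prod_congr rfl fun i _ =>
        (Set.indicator_of_mem (hx i (Set.mem_univ i)) _).symm
    · rw [Set.indicator_of_notMem hx]
      rw [Set.mem_univ_pi] at hx
      push_neg at hx
      obtain ⟨i, hi⟩ := hx
      exact (Finset.prod_eq_zero (Finset.mem_univ i)
        (Set.indicator_of_notMem hi _)).symm
  simp_rw [heq]
  rw [lintegral_pi_prod' ν _ (fun i => (hφ i).indicator (hs i))]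
  exact Finset.prod_congr rfl fun i _ => by
    rw [lintegral_indicator (hs i), ← withDensity_apply _ (hs i)]

theorem gauss_coord (a b : ℝ) {v : ℝ≥0} (hv : v ≠ 0) (l : ℝ) :
    ∫ t, gaussianPDFReal b v t * (gaussianPDFReal a v t / gaussianPDFReal b v t) ^ l
      = Real.exp (l * (l - 1) * (a - b) ^ 2 / (2 * v)) := by
  have hvpos : (0:ℝ) < (v:ℝ) := by positivity
  have hA : (0:ℝ) < (Real.sqrt (2 * π * v))⁻¹ := by
    rw [inv_pos]
    exact Real.sqrt_pos.mpr (by positivity)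
  have key : ∀ t : ℝ, gaussianPDFReal b v t * (gaussianPDFReal a v t / gaussianPDFReal b v t) ^ l
      = gaussianPDFReal (l * a + (1 - l) * b) v t
          * Real.exp (l * (l - 1) * (a - b) ^ 2 / (2 * v)) := by
    intro t
    simp only [gaussianPDFReal]
    rw [mul_div_mul_left _ _ (ne_of_gt hA), ← Real.exp_sub, ← Real.exp_mul,
      mul_assoc, ← Real.exp_add, mul_assoc (√(2 * π * (v:ℝ)))⁻¹, ← Real.exp_add]
    congr 1
    field_simp
    ring
  simp only [key]
  rw [integral_mul_const, integral_gaussianPDFReal_eq_one _ hv, one_mul]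

theorem renyi_gauss_aux (σ : ℝ) (hσ : 0 < σ) (d : ℕ) (μ μ' : Fin d → ℝ) (l : ℝ) (hl : 1 < l) :
    ∫ y, ((Measure.pi fun i => gaussianReal (μ i) (Real.toNNReal (σ ^ 2))).rnDeriv
        (Measure.pi fun i => gaussianReal (μ' i) (Real.toNNReal (σ ^ 2))) y).toReal ^ l
      ∂(Measure.pi fun i => gaussianReal (μ' i) (Real.toNNReal (σ ^ 2)))
      = Real.exp (l * (l - 1) * (∑ i, (μ i - μ' i) ^ 2) / (2 * σ ^ 2)) := by
  have hσ2 : (0:ℝ) < σ ^ 2 := by positivity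
  set v : ℝ≥0 := Real.toNNReal (σ ^ 2) with hv_def
  have hv : v ≠ 0 := (Real.toNNReal_pos.mpr hσ2).ne'
  have hvcoe : (v:ℝ) = σ ^ 2 := Real.coe_toNNReal _ hσ2.le
  set P := Measure.pi fun i => gaussianReal (μ i) v with hP_def
  set Q := Measure.pi fun i => gaussianReal (μ' i) v with hQ_def
  set volpi : Measure (Fin d → ℝ) := Measure.pi fun _ => (volume : Measure ℝ) with hvolpi
  set F : (Fin d → ℝ) → ℝ≥0∞ := fun x => ∏ i, gaussianPDF (μ i) v (x i) with hF_def
  set G : (Fin d → ℝ) → ℝ≥0∞ := fun x => ∏ i, gaussianPDF (μ' i) v (x i) with hG_def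
  have hFmeas : Measurable F := Finset.measurable_prod _ fun i _ =>
    (measurable_gaussianPDF _ _).comp (measurable_pi_apply i)
  have hGmeas : Measurable G := Finset.measurable_prod _ fun i _ =>
    (measurable_gaussianPDF _ _).comp (measurable_pi_apply i)
  haveI : ∀ (m : Fin d → ℝ) (i : Fin d),
      SigmaFinite ((volume : Measure ℝ).withDensity (gaussianPDF (m i) v)) := by
    intro m i
    rw [← gaussianReal_of_var_ne_zero _ hv]
    infer_instance
  have hP : P = volpi.withDensity F := by
    calc P = Measure.pi fun i => (volume : Measure ℝ).withDensity (gaussianPDF (μ i) v) := by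
          rw [hP_def]; congr 1; funext i; exact gaussianReal_of_var_ne_zero _ hv
      _ = volpi.withDensity F := pi_withDensity' _ _ (fun i => measurable_gaussianPDF _ _)
  have hQ : Q = volpi.withDensity G := by
    calc Q = Measure.pi fun i => (volume : Measure ℝ).withDensity (gaussianPDF (μ' i) v) := by
          rw [hQ_def]; congr 1; funext i; exact gaussianReal_of_var_ne_zero _ hv
      _ = volpi.withDensity G := pi_withDensity' _ _ (fun i => measurable_gaussianPDF _ _)
  have hPac : P ≪ volpi := hP ▸ withDensity_absolutelyContinuous _ _
  have hQac : Q ≪ volpi := hQ ▸ withDensity_absolutelyContinuous _ _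
  have hG0 : ∀ x, G x ≠ 0 := fun x => Finset.prod_ne_zero_iff.mpr fun i _ =>
    (gaussianPDF_pos _ hv _).ne'
  have hGtop : ∀ x, G x ≠ ∞ := fun x => ENNReal.prod_ne_top fun i _ => ENNReal.ofReal_ne_top
  have h1 : P.rnDeriv volpi =ᵐ[volpi] F := by
    rw [hP]; exact Measure.rnDeriv_withDensity _ hFmeas
  have h2 : P.rnDeriv Q =ᵐ[volpi] fun x => (G x)⁻¹ * P.rnDeriv volpi x := by
    rw [hQ]
    exact Measure.rnDeriv_withDensity_right_of_absolutelyContinuous hPac hGmeas.aemeasurable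
      (Filter.Eventually.of_forall hG0) (Filter.Eventually.of_forall hGtop)
  have h3 : P.rnDeriv Q =ᵐ[Q] fun x => (G x)⁻¹ * F x := by
    refine hQac.ae_eq ?_
    filter_upwards [h1, h2] with x hx1 hx2
    rw [hx2, hx1]
  have h4 : (fun y => (P.rnDeriv Q y).toReal ^ l) =ᵐ[Q] fun y =>
      ∏ i, (gaussianPDFReal (μ i) v (y i) / gaussianPDFReal (μ' i) v (y i)) ^ l := by
    filter_upwards [h3] with y hy
    rw [hy]
    have htF : (F y).toReal = ∏ i, gaussianPDFReal (μ i) v (y i) := by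
      rw [hF_def, ENNReal.toReal_prod]
      exact Finset.prod_congr rfl fun i _ => ENNReal.toReal_ofReal (gaussianPDFReal_nonneg _ _ _)
    have htG : (G y).toReal = ∏ i, gaussianPDFReal (μ' i) v (y i) := by
      rw [hG_def, ENNReal.toReal_prod]
      exact Finset.prod_congr rfl fun i _ => ENNReal.toReal_ofReal (gaussianPDFReal_nonneg _ _ _)
    rw [ENNReal.toReal_mul, ENNReal.toReal_inv, htF, htG, inv_mul_eq_div,
      ← Finset.prod_div_distrib]
    exact (Real.finset_prod_rpow _ _ (fun i _ => div_nonneg (gaussianPDFReal_nonneg _ _ _)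
      (gaussianPDFReal_nonneg _ _ _)) l).symm
  rw [integral_congr_ae h4, hQ_def,
    integral_pi_prod' (fun i => gaussianReal (μ' i) v)
      (fun i t => (gaussianPDFReal (μ i) v t / gaussianPDFReal (μ' i) v t) ^ l)]
  have hco : ∀ i, ∫ t, (gaussianPDFReal (μ i) v t / gaussianPDFReal (μ' i) v t) ^ l
      ∂(gaussianReal (μ' i) v)
      = Real.exp (l * (l - 1) * (μ i - μ' i) ^ 2 / (2 * (v:ℝ))) := by
    intro i
    rw [gaussianReal_of_var_ne_zero _ hv]
    have hrepr : gaussianPDF (μ' i) v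
        = fun x => ((Real.toNNReal (gaussianPDFReal (μ' i) v x) : ℝ≥0) : ℝ≥0∞) := rfl
    rw [hrepr, integral_withDensity_eq_integral_smul
      (f := fun x => Real.toNNReal (gaussianPDFReal (μ' i) v x))
      (measurable_real_toNNReal.comp (measurable_gaussianPDFReal _ _)) _]
    rw [integral_congr_ae (Filter.Eventually.of_forall fun x => by
      rw [NNReal.smul_def,
        Real.coe_toNNReal _ (gaussianPDFReal_nonneg _ _ _)])]
    exact gauss_coord (μ i) (μ' i) hv l
  simp_rw [hco]
  rw [← Real.exp_sum]
  congr 1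
  rw [hvcoe, ← Finset.sum_div, ← Finset.mul_sum]


/-- Rényi divergence between spherical Gaussians: if `‖μ − μ′‖₂ ≤ Δ` then for all `l > 1`,
`D_l(N(μ, σ²I) ‖ N(μ′, σ²I)) = l·‖μ − μ′‖₂²/(2σ²) ≤ l·Δ²/(2σ²)`.  In particular the Gaussian
mechanism with `σ² = Δ²/(2ρ)` is `ρ`-CDP. -/
theorem gaussian_renyi_divergence (σ Δ : ℝ) (hσ : 0 < σ) (d : ℕ) (μ μ' : Fin d → ℝ)
    (hΔ : Real.sqrt (∑ i, (μ i - μ' i) ^ 2) ≤ Δ) (l : ℝ) (hl : 1 < l) :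
    renyiDiv (Measure.pi fun i => gaussianReal (μ i) (Real.toNNReal (σ ^ 2)))
        (Measure.pi fun i => gaussianReal (μ' i) (Real.toNNReal (σ ^ 2))) l
      = l * (∑ i, (μ i - μ' i) ^ 2) / (2 * σ ^ 2) ∧
    l * (∑ i, (μ i - μ' i) ^ 2) / (2 * σ ^ 2) ≤ l * Δ ^ 2 / (2 * σ ^ 2) := by
  have hσ2 : (0:ℝ) < σ ^ 2 := by positivity
  have hl' : l - 1 ≠ 0 := sub_ne_zero.mpr (ne_of_gt hl)
  constructor
  · unfold renyiDiv
    rw [renyi_gauss_aux σ hσ d μ μ' l hl, Real.log_exp]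
    field_simp
  · have hSnn : 0 ≤ ∑ i, (μ i - μ' i) ^ 2 := Finset.sum_nonneg fun i _ => sq_nonneg _
    have hS : (∑ i, (μ i - μ' i) ^ 2) ≤ Δ ^ 2 := by
      calc (∑ i, (μ i - μ' i) ^ 2) = Real.sqrt (∑ i, (μ i - μ' i) ^ 2) ^ 2 :=
            (Real.sq_sqrt hSnn).symm
        _ ≤ Δ ^ 2 := pow_le_pow_left₀ (Real.sqrt_nonneg _) hΔ 2
    gcongr
end

section
/- Let Y be a finite nonempty set and q, q′ : Y → ℝ two quality score functions (corresponding to two neighboring datasets) such that for all y, y′ ∈ Y, (q(y) − q′(y)) − (q(y′) − q′(y′)) ≤ Δ for some Δ > 0 (bounded range Δ). For ε > 0 let P be the distribution on Y with P(y) ∝ exp(ε·q(y)/Δ) and Q the distribution with Q(y) ∝ exp(ε·q′(y)/Δ). Then for all λ > 1, D_λ(P‖Q) ≤ λ·ε²/8 and D_λ(Q‖P) ≤ λ·ε²/8; i.e., the exponential mechanism with range Δ(q) is ε²/8-CDP. -/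
open MeasureTheory ProbabilityTheory Real Finset

private lemma hoeffding_fin{Y : Type*} [Fintype Y] [Nonempty Y] (w : Y → ℝ)
    (hw : ∀ y, 0 < w y) (hw1 : ∑ y, w y = 1) (x : Y → ℝ) (a b : ℝ)
    (hx : ∀ y, x y ∈ Set.Icc a b) (t : ℝ) :
    Real.log (∑ y, w y * Real.exp (t * x y)) ≤
      t * (∑ y, w y * x y) + t ^ 2 * (b - a) ^ 2 / 8 := by
  set μ := ∑ y, w y * x y with hμ
  set c : ℝ := (b - a) ^ 2 with hc
  set S : ℝ → ℝ := fun s => ∑ y, w y * Real.exp (s * x y) with hSdef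
  set T : ℝ → ℝ := fun s => ∑ y, w y * x y * Real.exp (s * x y) with hTdef
  set U : ℝ → ℝ := fun s => ∑ y, w y * (x y) ^ 2 * Real.exp (s * x y) with hUdef
  have hSpos : ∀ s, 0 < S s := fun s =>
    Finset.sum_pos (fun y _ => mul_pos (hw y) (Real.exp_pos _)) Finset.univ_nonempty
  have hS : ∀ s, HasDerivAt S (T s) s := by
    intro s
    have h : ∀ y ∈ Finset.univ, HasDerivAt (fun u : ℝ => w y * Real.exp (u * x y))
        (w y * x y * Real.exp (s * x y)) s := by
      intro y _
      have h1 : HasDerivAt (fun u : ℝ => u * x y) (x y) s := hasDerivAt_mul_const _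
      have h3 := (h1.exp).const_mul (w y)
      exact h3.congr_deriv (by ring)
    exact HasDerivAt.fun_sum h
  have hT : ∀ s, HasDerivAt T (U s) s := by
    intro s
    have h : ∀ y ∈ Finset.univ, HasDerivAt (fun u : ℝ => w y * x y * Real.exp (u * x y))
        (w y * (x y) ^ 2 * Real.exp (s * x y)) s := by
      intro y _
      have h1 : HasDerivAt (fun u : ℝ => u * x y) (x y) s := hasDerivAt_mul_const _
      have h3 := (h1.exp).const_mul (w y * x y)
      exact h3.congr_deriv (by ring)
    exact HasDerivAt.fun_sum h
  have key : ∀ s, U s * S s - T s * T s ≤ c / 4 * (S s) ^ 2 := by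
    intro s
    set c0 := (a + b) / 2 with hc0
    set V : ℝ := ∑ y, w y * (x y - c0) ^ 2 * Real.exp (s * x y) with hV
    have hUid : U s = V + 2 * c0 * T s - c0 ^ 2 * S s := by
      simp only [hUdef, hTdef, hSdef, hV, Finset.mul_sum, ← Finset.sum_sub_distrib,
        ← Finset.sum_add_distrib]
      apply Finset.sum_congr rfl
      intro y _; ring
    have hVle : V ≤ c / 4 * S s := by
      rw [hV, hSdef, Finset.mul_sum]
      apply Finset.sum_le_sum
      intro y _
      have h1 := (hx y).1
      have h2 := (hx y).2
      have : (x y - c0) ^ 2 ≤ c / 4 := by rw [hc0, hc]; nlinarith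
      have := mul_le_mul_of_nonneg_right (mul_le_mul_of_nonneg_left this (hw y).le)
        (Real.exp_pos (s * x y)).le
      calc w y * (x y - c0) ^ 2 * Real.exp (s * x y)
          = w y * (x y - c0) ^ 2 * Real.exp (s * x y) := rfl
        _ ≤ w y * (c / 4) * Real.exp (s * x y) := this
        _ = c / 4 * (w y * Real.exp (s * x y)) := by ring
    nlinarith [sq_nonneg (T s - c0 * S s), (hSpos s), mul_le_mul_of_nonneg_right hVle (hSpos s).le]
  set G : ℝ → ℝ := fun s => μ + s * (c / 4) - T s / S s with hGdef
  set g : ℝ → ℝ := fun s => s * μ + s ^ 2 * (c / 8) - Real.log (S s) with hgdef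
  have hg : ∀ s, HasDerivAt g (G s) s := by
    intro s
    have h1 : HasDerivAt (fun u : ℝ => u * μ) μ s := hasDerivAt_mul_const _
    have h2 : HasDerivAt (fun u : ℝ => u ^ 2 * (c / 8)) (2 * s * (c / 8)) s := by
      have := (hasDerivAt_pow 2 s).mul_const (c / 8)
      exact this.congr_deriv (by norm_num)
    have h3 : HasDerivAt (fun u : ℝ => Real.log (S u)) (T s / S s) s :=
      (hS s).log (hSpos s).ne'
    have := (h1.add h2).sub h3
    exact this.congr_deriv (by rw [hGdef]; ring)
  have hG : ∀ s, HasDerivAt G (c / 4 - (U s * S s - T s * T s) / (S s) ^ 2) s := by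
    intro s
    have h1 : HasDerivAt (fun u : ℝ => μ + u * (c / 4)) (c / 4) s := by
      simpa using ((hasDerivAt_id s).mul_const (c / 4)).const_add μ
    have h2 : HasDerivAt (fun u : ℝ => T u / S u)
        ((U s * S s - T s * T s) / (S s) ^ 2) s := (hT s).div (hS s) (hSpos s).ne'
    exact h1.sub h2
  have hGmono : Monotone G := by
    apply monotone_of_deriv_nonneg
    · exact fun s => (hG s).differentiableAt
    · intro s
      rw [(hG s).deriv]
      have := key s
      have h2 : (U s * S s - T s * T s) / (S s) ^ 2 ≤ c / 4 := by
        rw [div_le_iff₀ (pow_pos (hSpos s) 2)]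
        linarith [key s]
      linarith
  have hS0 : S 0 = 1 := by simp [hSdef, hw1]
  have hT0 : T 0 = μ := by simp [hTdef, hμ]
  have hG0 : G 0 = 0 := by rw [hGdef]; simp [hS0, hT0]
  have hg0 : g 0 = 0 := by rw [hgdef]; simp [hS0]
  have hgt : 0 ≤ g t := by
    rcases le_total 0 t with ht | ht
    · have hmono : MonotoneOn g (Set.Ici 0) := by
        apply monotoneOn_of_deriv_nonneg (convex_Ici 0)
        · exact fun s _ => ((hg s).differentiableAt).continuousAt.continuousWithinAt
        · exact fun s _ => ((hg s).differentiableAt).differentiableWithinAt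
        · intro s hs
          rw [(hg s).deriv, ← hG0]
          exact hGmono (le_of_lt (by simpa using hs))
      have := hmono (Set.self_mem_Ici) (Set.mem_Ici.2 ht) ht
      linarith [hg0 ▸ this]
    · have hanti : AntitoneOn g (Set.Iic 0) := by
        apply antitoneOn_of_deriv_nonpos (convex_Iic 0)
        · exact fun s _ => ((hg s).differentiableAt).continuousAt.continuousWithinAt
        · exact fun s _ => ((hg s).differentiableAt).differentiableWithinAt
        · intro s hs
          rw [(hg s).deriv, ← hG0]
          exact hGmono (le_of_lt (by simpa using hs))
      have := hanti (Set.mem_Iic.2 ht) (Set.self_mem_Iic) ht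
      linarith [hg0 ▸ this]
  have : Real.log (S t) ≤ t * μ + t ^ 2 * (c / 8) := by
    rw [hgdef] at hgt; dsimp at hgt; linarith
  calc Real.log (∑ y, w y * Real.exp (t * x y)) = Real.log (S t) := rfl
    _ ≤ t * μ + t ^ 2 * (c / 8) := this
    _ = t * μ + t ^ 2 * (b - a) ^ 2 / 8 := by rw [hc]; ring


private lemma renyi_aux {Y : Type*} [Fintype Y] [Nonempty Y] (f g : Y → ℝ) (ε : ℝ) (hε : 0 < ε)
    (hr : ∀ y y' : Y, (f y - g y) - (f y' - g y') ≤ ε) (l : ℝ) (hl : 1 < l) :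
    (l - 1)⁻¹ * Real.log (∑ y, (Real.exp (f y) / ∑ z, Real.exp (f z)) ^ l *
      (Real.exp (g y) / ∑ z, Real.exp (g z)) ^ (1 - l)) ≤ l * ε ^ 2 / 8 := by
  set A : ℝ := ∑ z, Real.exp (f z) with hAdef
  set B : ℝ := ∑ z, Real.exp (g z) with hBdef
  have hA : 0 < A := Finset.sum_pos (fun z _ => Real.exp_pos _) Finset.univ_nonempty
  have hB : 0 < B := Finset.sum_pos (fun z _ => Real.exp_pos _) Finset.univ_nonempty
  set h : Y → ℝ := fun y => f y - g y with hhdef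
  set b : ℝ := Finset.univ.sup' Finset.univ_nonempty h with hbdef
  set a : ℝ := b - ε with hadef
  have hxmem : ∀ y, h y ∈ Set.Icc a b := by
    intro y
    constructor
    · obtain ⟨y0, _, hy0⟩ := Finset.exists_mem_eq_sup' Finset.univ_nonempty h
      have := hr y0 y
      rw [hadef, hbdef, hy0]
      simp only [hhdef] at this ⊢
      linarith
    · exact Finset.le_sup' h (Finset.mem_univ y)
  set v : Y → ℝ := fun y => Real.exp (f y) / A with hvdef
  have hv : ∀ y, 0 < v y := fun y => div_pos (Real.exp_pos _) hA
  have hv1 : ∑ y, v y = 1 := by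
    rw [hvdef]; rw [← Finset.sum_div]; rw [← hAdef, div_self hA.ne']
  set μ := ∑ y, v y * h y with hμdef
  have H1 := hoeffding_fin v hv hv1 h a b hxmem (l - 1)
  have H2 := hoeffding_fin v hv hv1 h a b hxmem (-1)
  have hba : b - a = ε := by rw [hadef]; ring
  have hBA : ∑ y, v y * Real.exp ((-1) * h y) = B / A := by
    rw [hBdef, Finset.sum_div]
    apply Finset.sum_congr rfl
    intro y _
    rw [hvdef, hhdef]
    rw [div_mul_eq_mul_div, ← Real.exp_add]
    congr 1; ring
  have hident : ∑ y, (Real.exp (f y) / A) ^ l * (Real.exp (g y) / B) ^ (1 - l)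
      = (∑ y, v y * Real.exp ((l - 1) * h y)) * (B / A) ^ (l - 1) := by
    rw [Finset.sum_mul]
    apply Finset.sum_congr rfl
    intro y _
    have e1 : (Real.exp (f y) / A) ^ l = Real.exp ((f y - Real.log A) * l) := by
      rw [Real.rpow_def_of_pos (div_pos (Real.exp_pos _) hA),
        Real.log_div (Real.exp_pos _).ne' hA.ne', Real.log_exp]
    have e2 : (Real.exp (g y) / B) ^ (1 - l) = Real.exp ((g y - Real.log B) * (1 - l)) := by
      rw [Real.rpow_def_of_pos (div_pos (Real.exp_pos _) hB),
        Real.log_div (Real.exp_pos _).ne' hB.ne', Real.log_exp]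
    have e3 : (B / A) ^ (l - 1) = Real.exp ((Real.log B - Real.log A) * (l - 1)) := by
      rw [Real.rpow_def_of_pos (div_pos hB hA), Real.log_div hB.ne' hA.ne']
    have e4 : v y = Real.exp (f y - Real.log A) := by
      rw [hvdef, Real.exp_sub, Real.exp_log hA]
    rw [e1, e2, e3, e4, hhdef, ← Real.exp_add, ← Real.exp_add, ← Real.exp_add]
    congr 1 <;> ring
  have hSpos : 0 < ∑ y, v y * Real.exp ((l - 1) * h y) :=
    Finset.sum_pos (fun y _ => mul_pos (hv y) (Real.exp_pos _)) Finset.univ_nonempty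
  have hlog : Real.log (∑ y, (Real.exp (f y) / A) ^ l * (Real.exp (g y) / B) ^ (1 - l))
      = Real.log (∑ y, v y * Real.exp ((l - 1) * h y))
        + (l - 1) * Real.log (∑ y, v y * Real.exp ((-1) * h y)) := by
    rw [hident, Real.log_mul hSpos.ne' (Real.rpow_pos_of_pos (div_pos hB hA) _).ne',
      Real.log_rpow (div_pos hB hA), hBA]
  rw [hba] at H1 H2
  have hl1 : (0:ℝ) < l - 1 := by linarith
  have hmain : Real.log (∑ y, (Real.exp (f y) / A) ^ l * (Real.exp (g y) / B) ^ (1 - l))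
      ≤ (l - 1) * (l * ε ^ 2 / 8) := by
    rw [hlog]
    have h2' : (l - 1) * Real.log (∑ y, v y * Real.exp ((-1) * h y))
        ≤ (l - 1) * (-μ + ε ^ 2 / 8) := by
      apply mul_le_mul_of_nonneg_left _ hl1.le
      calc Real.log (∑ y, v y * Real.exp ((-1) * h y))
          ≤ (-1) * μ + (-1) ^ 2 * ε ^ 2 / 8 := H2
        _ = -μ + ε ^ 2 / 8 := by ring
    nlinarith [H1]
  calc (l - 1)⁻¹ * Real.log (∑ y, (Real.exp (f y) / A) ^ l * (Real.exp (g y) / B) ^ (1 - l))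
      ≤ (l - 1)⁻¹ * ((l - 1) * (l * ε ^ 2 / 8)) :=
        mul_le_mul_of_nonneg_left hmain (inv_nonneg.2 hl1.le)
    _ = l * ε ^ 2 / 8 := by field_simp


/-- Bounded-range analysis of the exponential mechanism: if two quality scores `q, q′` on a
finite set `Y` (coming from neighboring datasets) have range at most `Δ`, then the distributions
`P(y) ∝ exp(ε·q(y)/Δ)` and `Q(y) ∝ exp(ε·q′(y)/Δ)` satisfy `D_l(P‖Q) ≤ l·ε²/8` and
`D_l(Q‖P) ≤ l·ε²/8` for all `l > 1`, i.e. the exponential mechanism is `ε²/8`-CDP. -/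
theorem exponential_mechanism_cdp {Y : Type*} [Fintype Y] [Nonempty Y]
    (q q' : Y → ℝ) (Δ ε : ℝ) (hΔ : 0 < Δ) (hε : 0 < ε)
    (hbr : ∀ y y' : Y, (q y - q' y) - (q y' - q' y') ≤ Δ) (l : ℝ) (hl : 1 < l) :
    (l - 1)⁻¹ * Real.log (∑ y : Y,
        (Real.exp (ε * q y / Δ) / ∑ z : Y, Real.exp (ε * q z / Δ)) ^ l *
        (Real.exp (ε * q' y / Δ) / ∑ z : Y, Real.exp (ε * q' z / Δ)) ^ (1 - l))
      ≤ l * ε ^ 2 / 8 ∧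
    (l - 1)⁻¹ * Real.log (∑ y : Y,
        (Real.exp (ε * q' y / Δ) / ∑ z : Y, Real.exp (ε * q' z / Δ)) ^ l *
        (Real.exp (ε * q y / Δ) / ∑ z : Y, Real.exp (ε * q z / Δ)) ^ (1 - l))
      ≤ l * ε ^ 2 / 8 := by
  have hεΔ : 0 < ε / Δ := div_pos hε hΔ
  constructor
  · apply renyi_aux (fun y => ε * q y / Δ) (fun y => ε * q' y / Δ) ε hε _ l hl
    intro y y'
    have h1 := hbr y y'
    calc ε * q y / Δ - ε * q' y / Δ - (ε * q y' / Δ - ε * q' y' / Δ)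
        = ε / Δ * ((q y - q' y) - (q y' - q' y')) := by ring
      _ ≤ ε / Δ * Δ := mul_le_mul_of_nonneg_left h1 hεΔ.le
      _ = ε := div_mul_cancel₀ ε hΔ.ne'
  · apply renyi_aux (fun y => ε * q' y / Δ) (fun y => ε * q y / Δ) ε hε _ l hl
    intro y y'
    have h1 := hbr y' y
    calc ε * q' y / Δ - ε * q y / Δ - (ε * q' y' / Δ - ε * q y' / Δ)
        = ε / Δ * ((q y' - q' y') - (q y - q' y)) := by ring
      _ ≤ ε / Δ * Δ := mul_le_mul_of_nonneg_left h1 hεΔ.le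
      _ = ε := div_mul_cancel₀ ε hΔ.ne'
end

section
/- Let A : X → Y be a randomized algorithm and fix ρ ≥ 0 and δ ∈ (0,1). Suppose that for each pair of neighboring datasets x ∼ x′ there exist: (1) events E, E′ (in the respective sources of randomness) with Pr_{A(x)}[E] ≥ 1−δ and Pr_{A(x′)}[E′] ≥ 1−δ, and a measurable set S ⊆ Y of outcomes reachable by A(x) under E and by A(x′) under E′; (2) probability measures P′ and Q′ with common support S such that, writing P = law(A(x)) and Q = law(A(x′)), for all y ∈ S one has P(y) = Pr_{A(x)}[E]·P′(y) and Q(y) = Pr_{A(x′)}[E′]·Q′(y), while outcomes outside S occur only under ¬E (resp. ¬E′); and (3) D_λ(P′‖Q′) ≤ λρ and D_λ(Q′‖P′) ≤ λρ for all λ > 1. Then A is δ-approximate ρ-CDP. -/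
open MeasureTheory ProbabilityTheory Real

lemma le_of_restrict {Y : Type*} [MeasurableSpace Y] {P P' : Measure Y} {S : Set Y}
    (hS : MeasurableSet S) (hP'c : P' Sᶜ = 0) {α δ : ℝ} (hδα : 1 - δ ≤ α)
    (hres : P.restrict S = ENNReal.ofReal α • P') :
    ENNReal.ofReal (1 - δ) • P' ≤ P := by
  intro s
  have hdiff : P' (s \ S) = 0 :=
    measure_mono_null (Set.diff_subset_compl s S) hP'c
  have hinter : P' (s ∩ S) = P' s := by
    have := measure_inter_add_diff (μ := P') s hS
    rw [hdiff, add_zero] at this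
    exact this
  have hres' : P (s ∩ S) = ENNReal.ofReal α * P' (s ∩ S) := by
    have h1 : P.restrict S (s ∩ S) = P (s ∩ S) := by
      rw [Measure.restrict_apply' hS, Set.inter_assoc, Set.inter_self]
    rw [hres, Measure.smul_apply, smul_eq_mul] at h1
    exact h1.symm
  calc (ENNReal.ofReal (1 - δ) • P') s = ENNReal.ofReal (1 - δ) * P' (s ∩ S) := by
        rw [Measure.smul_apply, smul_eq_mul, hinter]
    _ ≤ ENNReal.ofReal α * P' (s ∩ S) := by
        gcongr
    _ = P (s ∩ S) := hres'.symm
    _ ≤ P s := measure_mono Set.inter_subset_left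

lemma decompose {Y : Type*} [MeasurableSpace Y] {P P' : Measure Y}
    [IsProbabilityMeasure P] [IsProbabilityMeasure P'] {δ : ℝ} (hδ0 : 0 < δ) (hδ1 : δ < 1)
    (hle : ENNReal.ofReal (1 - δ) • P' ≤ P) :
    ∃ P'' : Measure Y, IsProbabilityMeasure P'' ∧
      P = ENNReal.ofReal (1 - δ) • P' + ENNReal.ofReal δ • P'' := by
  set ν : Measure Y := ENNReal.ofReal (1 - δ) • P' with hν
  have hfin : IsFiniteMeasure ν := by
    constructor
    rw [hν, Measure.smul_apply, smul_eq_mul, measure_univ, mul_one]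
    exact ENNReal.ofReal_lt_top
  refine ⟨ENNReal.ofReal δ⁻¹ • (P - ν), ?_, ?_⟩
  · constructor
    have hsub : (P - ν) Set.univ = ENNReal.ofReal δ := by
      rw [Measure.sub_apply MeasurableSet.univ hle, measure_univ, hν,
        Measure.smul_apply, smul_eq_mul, measure_univ, mul_one]
      rw [← ENNReal.ofReal_one, ← ENNReal.ofReal_sub _ (by linarith : (0:ℝ) ≤ 1 - δ)]
      norm_num
    rw [Measure.smul_apply, smul_eq_mul, hsub, ← ENNReal.ofReal_mul (by positivity)]
    rw [inv_mul_cancel₀ hδ0.ne', ENNReal.ofReal_one]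
  · rw [smul_smul, ← ENNReal.ofReal_mul hδ0.le, mul_inv_cancel₀ hδ0.ne',
      ENNReal.ofReal_one, one_smul, add_comm]
    exact (Measure.sub_add_cancel_of_le hle).symm

/-- Unifying framework (Lemma 3.1): suppose that for each pair of neighboring inputs `x ∼ x′`
there are a measurable set `S` of non-differentiating outcomes, good-event probabilities
`α = Pr_{A(x)}[E] ≥ 1−δ` and `α′ = Pr_{A(x′)}[E′] ≥ 1−δ`, and probability measures `P′, Q′`
supported on `S` such that the law of `A(x)` restricted to `S` equals `α·P′` (outcomes outside
`S` occur only under `¬E`), and similarly for `A(x′)` with `α′·Q′`; if moreover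
`D_l(P′‖Q′) ≤ ρ·l` and `D_l(Q′‖P′) ≤ ρ·l` for all `l > 1`, then `A` is `δ`-approximate
`ρ`-CDP. -/
theorem unifying_framework {X Y : Type*} [MeasurableSpace Y] (Neighbor : X → X → Prop)
    (A : X → Measure Y) (hprob : ∀ x, IsProbabilityMeasure (A x))
    (ρ δ : ℝ) (hρ : 0 ≤ ρ) (hδ0 : 0 < δ) (hδ1 : δ < 1)
    (hyp : ∀ x x', Neighbor x x' →
      ∃ (S : Set Y) (α α' : ℝ) (P' Q' : Measure Y),
        MeasurableSet S ∧ IsProbabilityMeasure P' ∧ IsProbabilityMeasure Q' ∧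
        1 - δ ≤ α ∧ 1 - δ ≤ α' ∧ P' Sᶜ = 0 ∧ Q' Sᶜ = 0 ∧
        (A x).restrict S = ENNReal.ofReal α • P' ∧
        (A x').restrict S = ENNReal.ofReal α' • Q' ∧
        ∀ l : ℝ, 1 < l → renyiDiv P' Q' l ≤ ρ * l ∧ renyiDiv Q' P' l ≤ ρ * l) :
    ∀ x x', Neighbor x x' → IsApproxCDPPair (A x) (A x') ρ δ := by
  intro x x' hn
  obtain ⟨S, α, α', P', Q', hS, hP', hQ', hα, hα', hPc, hQc, hresP, hresQ, hren⟩ := hyp x x' hn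
  haveI := hprob x; haveI := hprob x'
  have hleP := le_of_restrict hS hPc hα hresP
  have hleQ := le_of_restrict hS hQc hα' hresQ
  obtain ⟨P'', hP'', hPeq⟩ := decompose hδ0 hδ1 hleP
  obtain ⟨Q'', hQ'', hQeq⟩ := decompose hδ0 hδ1 hleQ
  exact ⟨P', P'', Q', Q'', hP', hP'', hQ', hQ'', hPeq, hQeq, hren⟩
end

section
/- Let b > 0, δ ∈ (0, 1/2], Δ₀ ∈ ℕ₊ and Δ∞ ≥ 0, and set T = Δ∞ + b·log(Δ₀/(2δ)). Let Z₁, …, Z_m be i.i.d. Laplace random variables with scale b, where m ≤ Δ₀, and let c₁, …, c_m be reals with c_j ≤ Δ∞ for all j. Then Pr[c_j + Z_j ≤ T for all j = 1, …, m] ≥ (1 − (1/2)·exp(−(T − Δ∞)/b))^{Δ₀} ≥ 1 − δ. -/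
open MeasureTheory ProbabilityTheory Real
open Set Pointwise

lemma integrableOn_exp_div_Iic {b : ℝ} (hb : 0 < b) (t : ℝ) :
    IntegrableOn (fun z => Real.exp (z / b)) (Iic t) := by
  have h1 : Integrable ((Iic (t / b)).indicator Real.exp) :=
    (integrable_indicator_iff measurableSet_Iic).2 (integrableOn_exp_Iic (t / b))
  have h2 := (integrable_comp_mul_right_iff ((Iic (t / b)).indicator Real.exp)
    (inv_ne_zero hb.ne')).2 h1
  have h3 : (fun z : ℝ => ((Iic (t / b)).indicator Real.exp) (z * b⁻¹)) =
      (Iic t).indicator (fun z => Real.exp (z / b)) := by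
    funext z
    by_cases hz : z ≤ t
    · rw [Set.indicator_of_mem (by exact hz : z ∈ Iic t),
        Set.indicator_of_mem (by
          rw [mem_Iic, div_eq_mul_inv t b]
          exact (mul_le_mul_iff_of_pos_right (inv_pos.2 hb)).2 hz)]
      simp [div_eq_mul_inv]
    · rw [Set.indicator_of_notMem (by exact hz : z ∉ Iic t),
        Set.indicator_of_notMem (by
          rw [mem_Iic, div_eq_mul_inv t b, not_le]
          exact (mul_lt_mul_iff_of_pos_right (inv_pos.2 hb)).2 (not_le.1 hz))]
  rw [h3] at h2
  exact (integrable_indicator_iff measurableSet_Iic).1 h2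

lemma integral_exp_div_Iic {b : ℝ} (hb : 0 < b) (t : ℝ) :
    ∫ z in Iic t, Real.exp (z / b) = b * Real.exp (t / b) := by
  have h := MeasureTheory.Measure.setIntegral_comp_smul_of_pos volume Real.exp (Iic t)
    (R := b⁻¹) (inv_pos.2 hb)
  simp only [smul_eq_mul, Module.finrank_self, pow_one, inv_inv] at h
  rw [LinearOrderedField.smul_Iic (inv_pos.2 hb)] at h
  simp only [show ∀ z : ℝ, z / b = b⁻¹ * z from fun z => by ring]
  rw [h, integral_exp_Iic]

lemma integral_exp_neg_div_Ioi {b : ℝ} (hb : 0 < b) (t : ℝ) :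
    ∫ z in Ioi t, Real.exp (-z / b) = b * Real.exp (-t / b) := by
  have h := MeasureTheory.Measure.setIntegral_comp_smul_of_pos volume
    (fun x => Real.exp (-x)) (Ioi t) (R := b⁻¹) (inv_pos.2 hb)
  simp only [smul_eq_mul, Module.finrank_self, pow_one, inv_inv] at h
  rw [LinearOrderedField.smul_Ioi (inv_pos.2 hb)] at h
  simp only [show ∀ z : ℝ, -z / b = -(b⁻¹ * z) from fun z => by ring]
  rw [h, integral_exp_neg_Ioi]

lemma integrableOn_exp_neg_div_Ioi {b : ℝ} (hb : 0 < b) (t : ℝ) :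
    IntegrableOn (fun z => Real.exp (-z / b)) (Ioi t) := by
  have := exp_neg_integrableOn_Ioi t (inv_pos.2 hb)
  refine this.congr_fun (fun z _ => by ring_nf) measurableSet_Ioi

instance laplace.sigmaFinite (b μ : ℝ) : SigmaFinite (laplace b μ) :=
  MeasureTheory.SigmaFinite.withDensity_of_ne_top
    (Filter.Eventually.of_forall fun _ => ENNReal.ofReal_ne_top)

lemma laplace_Iic {b : ℝ} (hb : 0 < b) {t : ℝ} (ht : 0 ≤ t) :
    laplace b 0 (Iic t) = ENNReal.ofReal (1 - (1 / 2) * Real.exp (-t / b)) := by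
  have hmeas : Measurable fun z : ℝ => (2 * b)⁻¹ * Real.exp (-|z - 0| / b) := by
    fun_prop
  rw [laplace, withDensity_apply _ measurableSet_Iic]
  have hint : IntegrableOn (fun z : ℝ => (2 * b)⁻¹ * Real.exp (-|z - 0| / b)) (Iic t) := by
    refine Integrable.mono ((integrableOn_exp_div_Iic hb t).const_mul (2 * b)⁻¹)
      hmeas.aestronglyMeasurable ?_
    filter_upwards with z
    have h2b : (0:ℝ) ≤ (2 * b)⁻¹ := by positivity
    rw [Real.norm_eq_abs, Real.norm_eq_abs,
      abs_of_nonneg (mul_nonneg h2b (Real.exp_pos _).le),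
      abs_of_nonneg (mul_nonneg h2b (Real.exp_pos _).le)]
    refine mul_le_mul_of_nonneg_left (Real.exp_le_exp.2 ?_) h2b
    rw [div_le_div_iff_of_pos_right hb, sub_zero]
    exact neg_abs_le z
  rw [← MeasureTheory.ofReal_integral_eq_lintegral_ofReal hint
    (Filter.Eventually.of_forall fun z => by positivity)]
  congr 1
  have hsplit : Iic t = Iic 0 ∪ Ioc 0 t := (Iic_union_Ioc_eq_Iic ht).symm
  rw [hsplit, setIntegral_union (Iic_disjoint_Ioc le_rfl) measurableSet_Ioc
    (hint.mono_set (hsplit ▸ subset_union_left))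
    (hint.mono_set (hsplit ▸ subset_union_right))]
  have hA : ∫ z in Iic 0, (2 * b)⁻¹ * Real.exp (-|z - 0| / b) = 1 / 2 := by
    rw [setIntegral_congr_fun measurableSet_Iic
      (g := fun z => (2 * b)⁻¹ * Real.exp (z / b)) ?_]
    · rw [integral_const_mul, integral_exp_div_Iic hb]
      simp only [zero_div, Real.exp_zero]
      field_simp
    · intro z hz
      simp only [sub_zero]
      rw [abs_of_nonpos hz]
      ring_nf
  have hB : ∫ z in Ioc 0 t, (2 * b)⁻¹ * Real.exp (-|z - 0| / b)
      = 1 / 2 - (1 / 2) * Real.exp (-t / b) := by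
    rw [setIntegral_congr_fun measurableSet_Ioc
      (g := fun z => (2 * b)⁻¹ * Real.exp (-z / b)) ?_]
    · have hsp : Ioi (0:ℝ) = Ioc 0 t ∪ Ioi t := (Ioc_union_Ioi_eq_Ioi ht).symm
      have hIoi := integrableOn_exp_neg_div_Ioi hb 0
      have h1 : ∫ z in Ioc 0 t, Real.exp (-z / b)
          = (∫ z in Ioi 0, Real.exp (-z / b)) - ∫ z in Ioi t, Real.exp (-z / b) := by
        rw [hsp, setIntegral_union (Ioc_disjoint_Ioi le_rfl) measurableSet_Ioi
          (hIoi.mono_set (hsp ▸ subset_union_left))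
          (hIoi.mono_set (hsp ▸ subset_union_right))]
        ring
      rw [integral_const_mul, h1, integral_exp_neg_div_Ioi hb, integral_exp_neg_div_Ioi hb]
      simp only [neg_zero, zero_div, Real.exp_zero]
      field_simp
    · intro z hz
      simp only [sub_zero]
      rw [abs_of_pos hz.1]
  rw [hA, hB]
  ring

/-- Laplace threshold bound: with `T = Δinf + b·log(Δ₀/(2δ))`, for `m ≤ Δ₀` i.i.d. `Lap(b)`
noise variables `Z_j` added to counts `c_j ≤ Δinf`, the probability that all noisy counts stay
at most `T` is at least `(1 − (1/2)·exp(−(T − Δinf)/b))^{Δ₀} ≥ 1 − δ`. -/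
theorem laplace_threshold_bound (b δ Δinf : ℝ) (Δ₀ m : ℕ) (hb : 0 < b) (hδ0 : 0 < δ)
    (hδ1 : δ ≤ 1 / 2) (hΔ₀ : 0 < Δ₀) (hΔinf : 0 ≤ Δinf) (hm : m ≤ Δ₀)
    (T : ℝ) (hT : T = Δinf + b * Real.log ((Δ₀ : ℝ) / (2 * δ)))
    (c : Fin m → ℝ) (hc : ∀ j, c j ≤ Δinf) :
    ENNReal.ofReal ((1 - (1 / 2) * Real.exp (-(T - Δinf) / b)) ^ Δ₀) ≤
      Measure.pi (fun _ : Fin m => laplace b 0) {z | ∀ j, c j + z j ≤ T} ∧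
    (1 - δ : ℝ) ≤ (1 - (1 / 2) * Real.exp (-(T - Δinf) / b)) ^ Δ₀ := by
  have hΔ₀R : (1:ℝ) ≤ (Δ₀ : ℝ) := by exact_mod_cast hΔ₀
  have hratio : (1:ℝ) ≤ (Δ₀ : ℝ) / (2 * δ) := by
    rw [le_div_iff₀ (by linarith)]
    linarith
  have hlog : 0 ≤ Real.log ((Δ₀ : ℝ) / (2 * δ)) := Real.log_nonneg hratio
  have hTinf : Δinf ≤ T := by
    rw [hT]; nlinarith
  have hexp : Real.exp (-(T - Δinf) / b) = 2 * δ / Δ₀ := by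
    rw [hT]
    rw [show -(Δinf + b * Real.log ((Δ₀ : ℝ) / (2 * δ)) - Δinf) / b
      = -Real.log ((Δ₀ : ℝ) / (2 * δ)) from by field_simp; ring]
    rw [Real.exp_neg, Real.exp_log (by positivity)]
    rw [inv_div]
  set q : ℝ := 1 - (1 / 2) * Real.exp (-(T - Δinf) / b) with hq
  have hqval : q = 1 - δ / Δ₀ := by
    rw [hq, hexp]; ring
  have hq0 : 0 ≤ q := by
    rw [hqval]
    have : δ / (Δ₀:ℝ) ≤ δ := by
      rw [div_le_iff₀ (by linarith)]; nlinarith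
    linarith
  have hq1 : q ≤ 1 := by
    rw [hqval]
    have : 0 ≤ δ / (Δ₀:ℝ) := by positivity
    linarith
  constructor
  · have hset : {z : Fin m → ℝ | ∀ j, c j + z j ≤ T}
        = Set.pi Set.univ (fun j => Iic (T - c j)) := by
      ext z
      simp only [Set.mem_setOf_eq, Set.mem_pi, Set.mem_univ, mem_Iic, true_implies]
      exact ⟨fun h j => by linarith [h j], fun h j => by linarith [h j]⟩
    rw [hset, Measure.pi_pi]
    have hfac : ∀ j : Fin m, ENNReal.ofReal q ≤ laplace b 0 (Iic (T - c j)) := by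
      intro j
      rw [laplace_Iic hb (by linarith [hc j])]
      apply ENNReal.ofReal_le_ofReal
      have : Real.exp (-(T - c j) / b) ≤ Real.exp (-(T - Δinf) / b) := by
        apply Real.exp_le_exp.2
        rw [div_le_div_iff_of_pos_right hb]
        linarith [hc j]
      rw [hq]
      linarith
    calc ENNReal.ofReal (q ^ Δ₀) ≤ ENNReal.ofReal (q ^ m) := by
          apply ENNReal.ofReal_le_ofReal
          exact pow_le_pow_of_le_one hq0 hq1 hm
      _ = ∏ _j : Fin m, ENNReal.ofReal q := by
          rw [Finset.prod_const, Finset.card_univ, Fintype.card_fin,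
            ← ENNReal.ofReal_pow hq0]
      _ ≤ ∏ j : Fin m, laplace b 0 (Iic (T - c j)) :=
          Finset.prod_le_prod' fun j _ => hfac j
  · rw [hqval]
    have hbern := one_add_mul_le_pow (a := -(δ / (Δ₀:ℝ))) (by
      have : δ / (Δ₀:ℝ) ≤ δ := by
        rw [div_le_iff₀ (by linarith)]; nlinarith
      linarith) Δ₀
    have : 1 + (Δ₀:ℝ) * -(δ / Δ₀) = 1 - δ := by
      field_simp
      ring
    rw [this] at hbern
    calc (1 - δ : ℝ) ≤ (1 + -(δ / Δ₀)) ^ Δ₀ := hbern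
      _ = (1 - δ / Δ₀) ^ Δ₀ := by ring_nf
end
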